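/- arXiv:1907.04979 — 9 statements merged into one kernel-verified Lean document; each statement's English description precedes it below -/
import Mathlib

section
/- Let G be the join G₁ ∇ G₂ where G₂ is a complete graph on k vertices and G₁ is a disconnected graph on n - k vertices. Then the vertex connectivity κ(G) equals k and the algebraic connectivity a(G) (the second smallest Laplacian eigenvalue) also equals k; in particular κ(G) = a(G). -/
open SimpleGraph Matrix

open scoped Classical

/-- The join `G₁ ∇ G₂` of two graphs on disjoint vertex sets: take the disjoint union and
add all edges between the two sides. -/
def SimpleGraph.join {α β : Type*} (G : SimpleGraph α) (H : SimpleGraph β) :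
    SimpleGraph (α ⊕ β) where
  Adj x y := match x, y with
    | Sum.inl a, Sum.inl b => G.Adj a b
    | Sum.inr a, Sum.inr b => H.Adj a b
    | _, _ => True
  symm := ⟨by rintro (a | a) (b | b) h <;> first | exact h.symm | trivial⟩
  loopless := ⟨by rintro (a | a) h <;> [exact G.loopless.irrefl a h; exact H.loopless.irrefl a h]⟩

/-- The vertex connectivity of `G`: the least size of a set of vertices whose removal
leaves a graph that is not preconnected. -/
noncomputable def vertexConnectivity {V : Type*} [Fintype V] (G : SimpleGraph V) : ℕ :=
  sInf {k | ∃ S : Finset V, S.card = k ∧ ¬ (G.induce ((↑S : Set V)ᶜ)).Preconnected}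

/-- The algebraic connectivity of a connected graph `G`: the second smallest Laplacian
eigenvalue, i.e. (since `G` is connected, `0` being a simple eigenvalue and all others
positive) the least nonzero Laplacian eigenvalue. -/
noncomputable def algConn {V : Type*} [Fintype V] [DecidableEq V] (G : SimpleGraph V) : ℝ :=
  sInf {μ : ℝ | μ ≠ 0 ∧ ∃ y : V → ℝ, y ≠ 0 ∧ G.lapMatrix ℝ *ᵥ y = μ • y}

@[simp] lemma join_adj_ll {α β : Type*} (G : SimpleGraph α) (H : SimpleGraph β) (a b : α) :
    (G.join H).Adj (Sum.inl a) (Sum.inl b) ↔ G.Adj a b := Iff.rfl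
@[simp] lemma join_adj_lr {α β : Type*} (G : SimpleGraph α) (H : SimpleGraph β) (a : α) (b : β) :
    (G.join H).Adj (Sum.inl a) (Sum.inr b) := trivial
@[simp] lemma join_adj_rl {α β : Type*} (G : SimpleGraph α) (H : SimpleGraph β) (a : β) (b : α) :
    (G.join H).Adj (Sum.inr a) (Sum.inl b) := trivial
@[simp] lemma join_adj_rr {α β : Type*} (G : SimpleGraph α) (H : SimpleGraph β) (a b : β) :
    (G.join H).Adj (Sum.inr a) (Sum.inr b) ↔ H.Adj a b := Iff.rfl

lemma lap_apply {V : Type*} [Fintype V] [DecidableEq V] (G : SimpleGraph V)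
    [DecidableRel G.Adj] (y : V → ℝ) (x : V) :
    (G.lapMatrix ℝ *ᵥ y) x = ∑ u, if G.Adj x u then (y x - y u) else 0 := by
  rw [lapMatrix_mulVec_apply, degree_eq_sum_if_adj, neighborFinset_eq_filter,
    Finset.sum_filter]
  simp_rw [Finset.sum_mul, ite_mul, one_mul, zero_mul, ← Finset.sum_sub_distrib,
    ite_sub_ite, sub_zero]

lemma sum_sub_sq {ι κ : Type*} [Fintype ι] [Fintype κ] (f : ι → ℝ) (g : κ → ℝ) :
    ∑ i, ∑ j, (f i - g j)^2 =
      (Fintype.card κ) * ∑ i, (f i)^2 - 2 * (∑ i, f i) * (∑ j, g j)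
        + (Fintype.card ι) * ∑ j, (g j)^2 := by
  have h : ∀ i, ∑ j, (f i - g j)^2 =
      (Fintype.card κ) * (f i)^2 - 2 * (f i) * (∑ j, g j) + ∑ j, (g j)^2 := by
    intro i
    simp_rw [sub_sq, Finset.sum_add_distrib, Finset.sum_sub_distrib, Finset.sum_const,
      Finset.card_univ, nsmul_eq_mul, ← Finset.mul_sum]
  simp_rw [h, Finset.sum_add_distrib, Finset.sum_sub_distrib, ← Finset.mul_sum,
    ← Finset.sum_mul, Finset.sum_const, Finset.card_univ, nsmul_eq_mul, Finset.mul_sum]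

theorem part1 {α : Type*} [Fintype α] [DecidableEq α] (k : ℕ) (hk : 0 < k)
    (G₁ : SimpleGraph α) (hdis : ¬ G₁.Preconnected) :
    sInf {m | ∃ S : Finset (α ⊕ Fin k), S.card = m ∧
      ¬ ((G₁.join (⊤ : SimpleGraph (Fin k))).induce ((↑S : Set (α ⊕ Fin k))ᶜ)).Preconnected} = k := by
  set G := G₁.join (⊤ : SimpleGraph (Fin k)) with hG
  have hmem : k ∈ {m | ∃ S : Finset (α ⊕ Fin k), S.card = m ∧
      ¬ (G.induce ((↑S : Set (α ⊕ Fin k))ᶜ)).Preconnected} := by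
    refine ⟨Finset.univ.image Sum.inr, ?_, ?_⟩
    · rw [Finset.card_image_of_injective _ Sum.inr_injective, Finset.card_univ, Fintype.card_fin]
    · intro hpre
      apply hdis
      intro a b
      have ha : (Sum.inl a : α ⊕ Fin k) ∈
          ((↑(Finset.univ.image Sum.inr : Finset (α ⊕ Fin k)) : Set (α ⊕ Fin k))ᶜ) := by simp
      have hb : (Sum.inl b : α ⊕ Fin k) ∈
          ((↑(Finset.univ.image Sum.inr : Finset (α ⊕ Fin k)) : Set (α ⊕ Fin k))ᶜ) := by simp
      let f : (G.induce ((↑(Finset.univ.image Sum.inr : Finset (α ⊕ Fin k)) : Set (α ⊕ Fin k))ᶜ)) →g G₁ :=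
        ⟨fun v => Sum.elim id (fun _ => a) v.val, ?_⟩
      · exact Reachable.map f (hpre ⟨Sum.inl a, ha⟩ ⟨Sum.inl b, hb⟩)
      · rintro ⟨x | x, hx⟩ ⟨y | y, hy⟩ hadj
        · exact hadj
        · simp at hy
        · simp at hx
        · simp at hx
  have hlb : ∀ m ∈ {m | ∃ S : Finset (α ⊕ Fin k), S.card = m ∧
      ¬ (G.induce ((↑S : Set (α ⊕ Fin k))ᶜ)).Preconnected}, k ≤ m := by
    rintro m ⟨S, rfl, hnp⟩
    by_contra hlt
    push_neg at hlt
    obtain ⟨j, hj⟩ : ∃ j : Fin k, (Sum.inr j : α ⊕ Fin k) ∉ S := by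
      by_contra hall
      push_neg at hall
      have hsub : (Finset.univ.image Sum.inr : Finset (α ⊕ Fin k)) ⊆ S := by
        intro x hx
        simp only [Finset.mem_image, Finset.mem_univ, true_and] at hx
        obtain ⟨j, rfl⟩ := hx
        exact hall j
      have := Finset.card_le_card hsub
      rw [Finset.card_image_of_injective _ Sum.inr_injective, Finset.card_univ,
        Fintype.card_fin] at this
      omega
    apply hnp
    have hr : (Sum.inr j : α ⊕ Fin k) ∈ ((↑S : Set (α ⊕ Fin k))ᶜ) := by simpa using hj
    set r : ((↑S : Set (α ⊕ Fin k))ᶜ : Set (α ⊕ Fin k)) := ⟨Sum.inr j, hr⟩ with hrdef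
    have hadj : ∀ w : ((↑S : Set (α ⊕ Fin k))ᶜ : Set (α ⊕ Fin k)), w ≠ r →
        (G.induce ((↑S : Set (α ⊕ Fin k))ᶜ)).Adj r w := by
      rintro ⟨x | x, hx⟩ hw
      · simp [hG, SimpleGraph.join]
      · have : x ≠ j := by
          intro h; exact hw (by simp [hrdef, h])
        have hne : j ≠ x := fun h => this h.symm
        simp [hG, SimpleGraph.join, hne, hrdef]
    have key : ∀ w, (G.induce ((↑S : Set (α ⊕ Fin k))ᶜ)).Reachable r w := by
      intro w
      by_cases h : w = r
      · rw [h]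
      · exact (hadj w h).reachable
    intro u v
    exact (key u).symm.trans (key v)
  exact le_antisymm (Nat.sInf_le hmem) (le_csInf ⟨k, hmem⟩ hlb)


theorem part2 {α : Type*} [Fintype α] [DecidableEq α] (k : ℕ) (hk : 0 < k)
    (G₁ : SimpleGraph α) (hdis : ¬ G₁.Preconnected) :
    sInf {μ : ℝ | μ ≠ 0 ∧ ∃ y : α ⊕ Fin k → ℝ, y ≠ 0 ∧
      (G₁.join (⊤ : SimpleGraph (Fin k))).lapMatrix ℝ *ᵥ y = μ • y} = (k : ℝ) := by
  set G := G₁.join (⊤ : SimpleGraph (Fin k)) with hG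
  -- membership of k
  have hmem : (k : ℝ) ∈ {μ : ℝ | μ ≠ 0 ∧ ∃ y : α ⊕ Fin k → ℝ, y ≠ 0 ∧
      G.lapMatrix ℝ *ᵥ y = μ • y} := by
    obtain ⟨a, hA⟩ : ∃ a, ¬ ∀ b, G₁.Reachable a b := by
      rw [Preconnected, not_forall] at hdis; exact hdis
    obtain ⟨b, hab⟩ := not_forall.mp hA
    set C : Finset α := Finset.univ.filter (fun v => G₁.Reachable a v) with hC
    have haC : a ∈ C := Finset.mem_filter.mpr ⟨Finset.mem_univ a, SimpleGraph.Reachable.refl a⟩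
    have hbC : b ∉ C := by simp [hC, hab]
    set c : ℝ := (C.card : ℝ) with hc
    set d : ℝ := ((Cᶜ).card : ℝ) with hd
    set y : α ⊕ Fin k → ℝ := Sum.elim (fun v => if v ∈ C then d else -c) 0 with hy
    have hsum : ∑ v : α, y (Sum.inl v) = 0 := by
      simp only [hy, Sum.elim_inl]
      rw [Finset.sum_ite, Finset.sum_const, Finset.sum_const]
      have h1 : Finset.univ.filter (fun v => v ∈ C) = C := by ext v; simp
      have h2 : Finset.univ.filter (fun v => ¬ v ∈ C) = Cᶜ := by ext v; simp
      rw [h1, h2, nsmul_eq_mul, nsmul_eq_mul, hc, hd]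
      ring
    have hcomp : ∀ v w, G₁.Adj v w → (v ∈ C ↔ w ∈ C) := by
      intro v w hvw
      simp only [hC, Finset.mem_filter, Finset.mem_univ, true_and]
      exact ⟨fun h => h.trans hvw.reachable, fun h => h.trans hvw.symm.reachable⟩
    refine ⟨Nat.cast_ne_zero.mpr hk.ne', y, ?_, ?_⟩
    · intro h
      have hb' : b ∈ Cᶜ := Finset.mem_compl.mpr hbC
      have : y (Sum.inl a) = 0 := congrFun h (Sum.inl a)
      simp only [hy, Sum.elim_inl, haC, if_true, hd] at this
      rw [Nat.cast_eq_zero, Finset.card_eq_zero] at this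
      simp [this] at hb'
    · ext x
      rw [lap_apply, Fintype.sum_sum_type]
      cases x with
      | inl v =>
        have h1 : ∀ w : α, (if G.Adj (Sum.inl v) (Sum.inl w)
            then (y (Sum.inl v) - y (Sum.inl w)) else 0) = 0 := by
          intro w
          by_cases h : G₁.Adj v w
          · have := hcomp v w h
            simp [hG, h, hy, this]
          · simp [hG, h]
        simp only [h1, Finset.sum_const_zero, zero_add]
        have h2 : ∀ j : Fin k, (if G.Adj (Sum.inl v) (Sum.inr j)
            then (y (Sum.inl v) - y (Sum.inr j)) else 0) = y (Sum.inl v) := by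
          intro j; simp [hG, hy]
        simp only [h2, Finset.sum_const, Finset.card_univ, Fintype.card_fin, nsmul_eq_mul,
          Pi.smul_apply, smul_eq_mul]
      | inr j =>
        have h1 : ∀ w : α, (if G.Adj (Sum.inr j) (Sum.inl w)
            then (y (Sum.inr j) - y (Sum.inl w)) else 0) = - y (Sum.inl w) := by
          intro w; simp [hG, hy]
        have h2 : ∀ j' : Fin k, (if G.Adj (Sum.inr j) (Sum.inr j')
            then (y (Sum.inr j) - y (Sum.inr j')) else 0) = 0 := by
          intro j'
          by_cases h : j = j' <;> simp [hG, h, hy]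
        simp only [h1, h2, Finset.sum_const_zero, add_zero, Finset.sum_neg_distrib,
          hsum, neg_zero, Pi.smul_apply, smul_eq_mul]
        simp [hy]
  -- lower bound
  have hlb : ∀ μ ∈ {μ : ℝ | μ ≠ 0 ∧ ∃ y : α ⊕ Fin k → ℝ, y ≠ 0 ∧
      G.lapMatrix ℝ *ᵥ y = μ • y}, (k : ℝ) ≤ μ := by
    rintro μ ⟨hμ, y, hy0, heig⟩
    -- sum of y is zero
    have hones : (fun _ => (1:ℝ)) ᵥ* G.lapMatrix ℝ = 0 := by
      rw [← Matrix.mulVec_transpose, (isSymm_lapMatrix (G := G) (R := ℝ)).eq, lapMatrix_mulVec_const_eq_zero]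
    have hsum0 : ∑ i, y i = 0 := by
      have h1 : (fun _ => (1:ℝ)) ⬝ᵥ (G.lapMatrix ℝ *ᵥ y) = 0 := by
        rw [Matrix.dotProduct_mulVec, hones, zero_dotProduct]
      rw [heig] at h1
      have h2 : (fun _ => (1:ℝ)) ⬝ᵥ (μ • y) = μ * ∑ i, y i := by
        rw [dotProduct_smul, smul_eq_mul]
        congr 1
        simp [dotProduct]
      rw [h2] at h1
      exact (mul_eq_zero.mp h1).resolve_left hμ
    -- quadratic form
    have hquad : μ * (y ⬝ᵥ y) =
        (∑ i, ∑ j, if G.Adj i j then (y i - y j)^2 else 0)/2 := by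
      have h := lapMatrix_toLinearMap₂' G (R := ℝ) y
      rw [Matrix.toLinearMap₂'_apply'] at h
      rw [← h, heig, dotProduct_smul, smul_eq_mul]
    have hyy : 0 < y ⬝ᵥ y := by
      obtain ⟨i, hi⟩ := Function.ne_iff.mp hy0
      have : y ⬝ᵥ y = ∑ i, (y i)^2 := by simp [dotProduct, sq]
      rw [this]
      exact Finset.sum_pos' (fun i _ => sq_nonneg _)
        ⟨i, Finset.mem_univ i, pow_two_pos_of_ne_zero hi⟩
    -- decompose the quadratic form
    set f : α → ℝ := fun v => y (Sum.inl v) with hf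
    set g : Fin k → ℝ := fun j => y (Sum.inr j) with hgdef
    set A := ∑ v, f v with hA
    set B := ∑ j, g j with hB
    have hAB : A + B = 0 := by
      rw [hA, hB, ← Fintype.sum_sum_type]
      exact hsum0
    set P := ∑ v, (f v)^2 with hP
    set Qg := ∑ j, (g j)^2 with hQg
    have hyy2 : y ⬝ᵥ y = P + Qg := by
      simp only [dotProduct, ← sq]
      rw [Fintype.sum_sum_type]
    have hQgnn : 0 ≤ Qg := Finset.sum_nonneg fun j _ => sq_nonneg _
    set Q := ∑ i, ∑ j, if G.Adj i j then (y i - y j)^2 else 0 with hQ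
    have hQdec : Q = (∑ v : α, ∑ w : α, if G₁.Adj v w then (f v - f w)^2 else 0)
        + (∑ v : α, ∑ j : Fin k, (f v - g j)^2)
        + (∑ j : Fin k, ∑ v : α, (g j - f v)^2)
        + (∑ j : Fin k, ∑ j' : Fin k, if j ≠ j' then (g j - g j')^2 else 0) := by
      rw [hQ, Fintype.sum_sum_type]
      simp_rw [Fintype.sum_sum_type]
      simp only [hG, join_adj_ll, join_adj_lr, join_adj_rl, join_adj_rr, if_true,
        top_adj, Finset.sum_add_distrib]
      ring
    have hdiag : (∑ j : Fin k, ∑ j' : Fin k, if j ≠ j' then (g j - g j')^2 else 0)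
        = ∑ j : Fin k, ∑ j' : Fin k, (g j - g j')^2 := by
      refine Finset.sum_congr rfl fun j _ => Finset.sum_congr rfl fun j' _ => ?_
      by_cases h : j = j' <;> simp [h]
    have hT : ∑ v : α, ∑ j : Fin k, (f v - g j)^2
        = k * P - 2*A*B + (Fintype.card α) * Qg := by
      have := sum_sub_sq f g
      simpa [Fintype.card_fin] using this
    have hT' : ∑ j : Fin k, ∑ v : α, (g j - f v)^2
        = (Fintype.card α) * Qg - 2*B*A + k * P := by
      have := sum_sub_sq g f
      simpa [Fintype.card_fin] using this
    have hU : ∑ j : Fin k, ∑ j' : Fin k, (g j - g j')^2 = 2*k*Qg - 2*B*B := by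
      have := sum_sub_sq g g
      simp [Fintype.card_fin] at this
      rw [this]; ring
    have hQαα : 0 ≤ ∑ v : α, ∑ w : α, if G₁.Adj v w then (f v - f w)^2 else 0 := by
      refine Finset.sum_nonneg fun v _ => Finset.sum_nonneg fun w _ => ?_
      positivity
    have hcard : (0:ℝ) ≤ (Fintype.card α) := by positivity
    have hineq : 2 * k * (y ⬝ᵥ y) ≤ Q := by
      rw [hQdec, hdiag, hT, hT', hU, hyy2]
      have hA' : A = -B := by linarith
      rw [hA']
      nlinarith [mul_self_nonneg B, hQgnn, hQαα, mul_nonneg hcard hQgnn]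
    by_contra hcon
    push_neg at hcon
    have h2 : μ * (y ⬝ᵥ y) < (k:ℝ) * (y ⬝ᵥ y) := mul_lt_mul_of_pos_right hcon hyy
    linarith
  exact le_antisymm (csInf_le ⟨(k:ℝ), hlb⟩ hmem) (le_csInf ⟨_, hmem⟩ hlb)


/-- If `G = G₁ ∇ G₂` where `G₂` is a complete graph on `k` vertices and `G₁`
is a disconnected graph, then `κ(G) = k` and `a(G) = k`; in particular `κ(G) = a(G)`. -/
theorem stmt_4 {α : Type*} [Fintype α] [DecidableEq α] (k : ℕ) (hk : 0 < k)
    (G₁ : SimpleGraph α) (hdis : ¬ G₁.Preconnected) :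
    vertexConnectivity (G₁.join (⊤ : SimpleGraph (Fin k))) = k ∧
      algConn (G₁.join (⊤ : SimpleGraph (Fin k))) = (k : ℝ) := by
  constructor
  · exact part1 k hk G₁ hdis
  · exact part2 k hk G₁ hdis
end

section
/- Let G be a non-complete connected chordal graph. Then κ(G) = a(G) if and only if G has a minimal separator S all of whose elements are universal vertices (adjacent to every other vertex of G). -/
open SimpleGraph Matrix

open scoped Classical

/-- A graph is chordal if every cycle of length at least four has a chord, i.e. an edge
between two vertices of the cycle that is not an edge of the cycle. -/
def IsChordal {V : Type*} (G : SimpleGraph V) : Prop :=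
  ∀ (v : V) (c : G.Walk v v), c.IsCycle → 4 ≤ c.length →
    ∃ u w, u ∈ c.support ∧ w ∈ c.support ∧ G.Adj u w ∧ s(u, w) ∉ c.edges

/-- `S` is a separator of `G`: removing `S` leaves a graph that is not preconnected. -/
def IsSeparator {V : Type*} (G : SimpleGraph V) (S : Set V) : Prop :=
  ¬ (G.induce Sᶜ).Preconnected

/-- `S` is a minimal separator of `G`: it is a separator and no proper subset is one. -/
def IsMinimalSeparator {V : Type*} (G : SimpleGraph V) (S : Set V) : Prop :=
  IsSeparator G S ∧ ∀ T ⊂ S, ¬ IsSeparator G T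

section Aux
variable {V : Type*} [Fintype V] [DecidableEq V] (G : SimpleGraph V)

lemma quadForm_eq (x : V → ℝ) :
    x ⬝ᵥ (G.lapMatrix ℝ *ᵥ x) =
      (∑ i : V, ∑ j : V, if G.Adj i j then (x i - x j)^2 else 0) / 2 := by
  rw [← Matrix.toLinearMap₂'_apply', SimpleGraph.lapMatrix_toLinearMap₂']

lemma lapT (x : V → ℝ) : (G.lapMatrix ℝ)ᵀ = G.lapMatrix ℝ :=
  (SimpleGraph.isSymm_lapMatrix ℝ G)

lemma sum_lapMulVec (y : V → ℝ) : ∑ i, (G.lapMatrix ℝ *ᵥ y) i = 0 := by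
  have h1 : ∑ i, (G.lapMatrix ℝ *ᵥ y) i = (fun _ => (1:ℝ)) ⬝ᵥ (G.lapMatrix ℝ *ᵥ y) := by
    simp [dotProduct]
  rw [h1, Matrix.dotProduct_mulVec, ← Matrix.mulVec_transpose,
    show (G.lapMatrix ℝ)ᵀ = G.lapMatrix ℝ from G.isSymm_lapMatrix ℝ,
    G.lapMatrix_mulVec_const_eq_zero]
  simp

lemma sum_eq_zero_of_eigen {μ : ℝ} (hμ : μ ≠ 0) {y : V → ℝ}
    (h : G.lapMatrix ℝ *ᵥ y = μ • y) : ∑ i, y i = 0 := by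
  have := sum_lapMulVec G y
  rw [h] at this
  simp only [Pi.smul_apply, smul_eq_mul, ← Finset.mul_sum] at this
  exact (mul_eq_zero.mp this).resolve_left hμ

lemma dot_self_pos {y : V → ℝ} (hy : y ≠ 0) : 0 < y ⬝ᵥ y := by
  obtain ⟨i, hi⟩ := Function.ne_iff.mp hy
  exact Finset.sum_pos' (fun j _ => mul_self_nonneg _)
    ⟨i, Finset.mem_univ i, mul_self_pos.mpr hi⟩

lemma eigen_pos {μ : ℝ} {y : V → ℝ} (hy : y ≠ 0)
    (h : G.lapMatrix ℝ *ᵥ y = μ • y) (hμ : μ ≠ 0) : 0 < μ := by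
  have h0 : 0 ≤ y ⬝ᵥ (G.lapMatrix ℝ *ᵥ y) := by
    rw [quadForm_eq]
    positivity
  rw [h] at h0
  have : y ⬝ᵥ (μ • y) = μ * (y ⬝ᵥ y) := by
    simp only [dotProduct, Pi.smul_apply, smul_eq_mul, Finset.mul_sum]
    exact Finset.sum_congr rfl (fun i _ => by ring)
  rw [this] at h0
  rcases hμ.lt_or_gt with hlt | hlt
  · nlinarith [dot_self_pos hy]
  · exact hlt

lemma algConn_bddBelow :
    BddBelow {μ : ℝ | μ ≠ 0 ∧ ∃ y : V → ℝ, y ≠ 0 ∧ G.lapMatrix ℝ *ᵥ y = μ • y} := by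
  refine ⟨0, fun μ hμ => ?_⟩
  obtain ⟨hμ0, y, hy, hey⟩ := hμ
  exact (eigen_pos G hy hey hμ0).le

end Aux

section Ray
variable {V : Type*} [Fintype V] [DecidableEq V] (G : SimpleGraph V)

lemma algConn_le_rayleigh (hconn : G.Connected) {y : V → ℝ} (hy : y ≠ 0)
    (hsum : ∑ i, y i = 0) :
    algConn G * (y ⬝ᵥ y) ≤ y ⬝ᵥ (G.lapMatrix ℝ *ᵥ y) := by
  have hL : (G.lapMatrix ℝ).IsHermitian := (SimpleGraph.posSemidef_lapMatrix ℝ G).1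
  set b := hL.eigenvectorBasis with hb
  set μ := hL.eigenvalues with hμdef
  have hip : ∀ x z : EuclideanSpace ℝ V, (inner ℝ x z : ℝ) = (x : V → ℝ) ⬝ᵥ (z : V → ℝ) := by
    intro x z
    simp [PiLp.inner_apply, dotProduct, mul_comm]
  have hrepr : ∀ z : EuclideanSpace ℝ V, ∀ i, b.repr z i = (b i : V → ℝ) ⬝ᵥ (z : V → ℝ) := by
    intro z i
    rw [OrthonormalBasis.repr_apply_apply, hip]
  have hinner : ∀ x z : EuclideanSpace ℝ V,
      (x : V → ℝ) ⬝ᵥ (z : V → ℝ) = ∑ i, ((b i : V → ℝ) ⬝ᵥ x) * ((b i : V → ℝ) ⬝ᵥ z) := by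
    intro x z
    have h1 : (inner ℝ x z : ℝ) = inner ℝ (b.repr x) (b.repr z) :=
      (b.repr.inner_map_map x z).symm
    rw [hip] at h1
    rw [h1, hip (b.repr x) (b.repr z)]
    exact Finset.sum_congr rfl fun i _ => by rw [hrepr, hrepr]
  set c : V → ℝ := fun i => (b i : V → ℝ) ⬝ᵥ y with hc
  -- eigen equation
  have heig : ∀ i, G.lapMatrix ℝ *ᵥ (b i : V → ℝ) = μ i • (b i : V → ℝ) := fun i =>
    hL.mulVec_eigenvectorBasis i
  -- repr of L y
  have hLy : ∀ i, (b i : V → ℝ) ⬝ᵥ (G.lapMatrix ℝ *ᵥ y) = μ i * c i := by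
    intro i
    rw [Matrix.dotProduct_mulVec, ← Matrix.mulVec_transpose,
      show (G.lapMatrix ℝ)ᵀ = G.lapMatrix ℝ from G.isSymm_lapMatrix ℝ, heig]
    simp only [hc]
    simp [dotProduct, Finset.mul_sum, mul_assoc]
  -- kernel components vanish
  have hker : ∀ i, μ i = 0 → c i = 0 := by
    intro i h0
    have hz : G.lapMatrix ℝ *ᵥ (b i : V → ℝ) = 0 := by rw [heig, h0, zero_smul]
    have hzz : Matrix.toLin' (G.lapMatrix ℝ) (b i : V → ℝ) = 0 := by
      rw [Matrix.toLin'_apply]; exact hz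
    have hcst := (G.lapMatrix_mulVec_eq_zero_iff_forall_reachable).mp hz
    obtain ⟨p0⟩ := hconn.nonempty
    have hconst : ∀ p, (b i : V → ℝ) p = (b i : V → ℝ) p0 := fun p =>
      hcst p p0 (hconn.preconnected p p0)
    have : c i = ∑ p, (b i : V → ℝ) p0 * y p := by
      simp only [hc, dotProduct]
      exact Finset.sum_congr rfl fun p _ => by rw [hconst p]
    rw [this, ← Finset.mul_sum, hsum, mul_zero]
  -- nonzero eigenvalues are ≥ algConn
  have hge : ∀ i, μ i ≠ 0 → algConn G ≤ μ i := by
    intro i h0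
    refine csInf_le (algConn_bddBelow G) ?_
    refine ⟨h0, (b i : V → ℝ), ?_, heig i⟩
    intro hzero
    exact b.orthonormal.ne_zero i (by ext j; exact congrFun hzero j)
  calc algConn G * (y ⬝ᵥ y) = ∑ i, algConn G * (c i * c i) := by
        rw [show y ⬝ᵥ y = ∑ i, ((b i : V → ℝ) ⬝ᵥ y) * ((b i : V → ℝ) ⬝ᵥ y) from
          hinner (WithLp.toLp 2 y) (WithLp.toLp 2 y), Finset.mul_sum]
    _ ≤ ∑ i, μ i * (c i * c i) := by
        refine Finset.sum_le_sum fun i _ => ?_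
        by_cases h0 : μ i = 0
        · rw [h0, hker i h0]; simp
        · exact mul_le_mul_of_nonneg_right (hge i h0) (mul_self_nonneg _)
    _ = y ⬝ᵥ (G.lapMatrix ℝ *ᵥ y) := by
        rw [show y ⬝ᵥ (G.lapMatrix ℝ *ᵥ y) = ∑ i, ((b i : V → ℝ) ⬝ᵥ y) *
          ((b i : V → ℝ) ⬝ᵥ (G.lapMatrix ℝ *ᵥ y)) from
          hinner (WithLp.toLp 2 y) (WithLp.toLp 2 (G.lapMatrix ℝ *ᵥ y))]
        exact Finset.sum_congr rfl fun i _ => by rw [hLy i]; ring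

end Ray

section Sep
variable {V : Type*} [Fintype V] [DecidableEq V] (G : SimpleGraph V)

lemma separator_parts {S : Set V} (hsep : IsSeparator G S) :
    ∃ A B : Finset V, A.Nonempty ∧ B.Nonempty ∧
      (∀ v : V, (v ∈ A ∨ v ∈ B) ↔ v ∉ S) ∧ (∀ v, ¬(v ∈ A ∧ v ∈ B)) ∧
      (∀ a ∈ A, ∀ b ∈ B, ¬ G.Adj a b) := by
  rw [IsSeparator, SimpleGraph.Preconnected] at hsep
  push_neg at hsep
  obtain ⟨u, v, huv⟩ := hsep
  refine ⟨{x | ∃ hx : x ∈ Sᶜ, (G.induce Sᶜ).Reachable u ⟨x, hx⟩}.toFinset,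
          {x | ∃ hx : x ∈ Sᶜ, ¬ (G.induce Sᶜ).Reachable u ⟨x, hx⟩}.toFinset, ?_, ?_, ?_, ?_, ?_⟩
  · exact ⟨u.1, by simp only [Set.mem_toFinset, Set.mem_setOf_eq]; exact ⟨u.2, Reachable.refl _⟩⟩
  · exact ⟨v.1, by simp only [Set.mem_toFinset, Set.mem_setOf_eq]; exact ⟨v.2, fun h => huv (by
      convert h)⟩⟩
  · intro x
    simp only [Set.mem_toFinset, Set.mem_setOf_eq]
    constructor
    · rintro (⟨hx, _⟩ | ⟨hx, _⟩) <;> exact hx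
    · intro hx
      by_cases hr : (G.induce Sᶜ).Reachable u ⟨x, hx⟩
      · exact Or.inl ⟨hx, hr⟩
      · exact Or.inr ⟨hx, hr⟩
  · rintro x ⟨hx1, hx2⟩
    simp only [Set.mem_toFinset, Set.mem_setOf_eq] at hx1 hx2
    obtain ⟨h1, r1⟩ := hx1
    obtain ⟨h2, r2⟩ := hx2
    exact r2 r1
  · intro a ha b hb hadj
    simp only [Set.mem_toFinset, Set.mem_setOf_eq] at ha hb
    obtain ⟨ha1, ha2⟩ := ha
    obtain ⟨hb1, hb2⟩ := hb
    exact hb2 (ha2.trans (Adj.reachable (by simp [SimpleGraph.comap_adj, hadj])))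

end Sep

section Cut
variable {V : Type*} [Fintype V] [DecidableEq V] (G : SimpleGraph V)

/-- chordal graphs have no induced 4-cycles -/
lemma no_induced_c4 (hch : IsChordal G) {x a y b : V}
    (h1 : G.Adj x a) (h2 : G.Adj a y) (h3 : G.Adj y b) (h4 : G.Adj b x)
    (hxy : x ≠ y) (hab : a ≠ b) (nxy : ¬ G.Adj x y) (nab : ¬ G.Adj a b) : False := by
  set c : G.Walk x x := Walk.cons h1 (Walk.cons h2 (Walk.cons h3 (Walk.cons h4 Walk.nil)))
    with hc
  have hxa : x ≠ a := h1.ne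
  have hax : a ≠ x := h1.ne'
  have hay : a ≠ y := h2.ne
  have hya : y ≠ a := h2.ne'
  have hyb : y ≠ b := h3.ne
  have hby : b ≠ y := h3.ne'
  have hbx : b ≠ x := h4.ne
  have hxb : x ≠ b := h4.ne'
  have hyx : y ≠ x := hxy.symm
  have hba : b ≠ a := hab.symm
  have hcyc : c.IsCycle := by
    rw [Walk.isCycle_def]
    refine ⟨⟨?_⟩, by simp [hc], ?_⟩
    · simp only [hc, Walk.edges_cons, Walk.edges_nil, List.nodup_cons, List.mem_cons,
        List.not_mem_nil, or_false, List.nodup_nil, and_true, Sym2.eq_iff]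
      push_neg
      tauto
    · simp only [hc, Walk.support_cons, Walk.support_nil, List.tail_cons, List.nodup_cons,
        List.mem_cons, List.not_mem_nil, or_false, List.nodup_nil, and_true]
      push_neg
      tauto
  have hlen : 4 ≤ c.length := by simp [hc]
  obtain ⟨u, w, hu, hw, huw, hne⟩ := hch x c hcyc hlen
  have hsupp : ∀ t, t ∈ c.support ↔ (t = x ∨ t = a ∨ t = y ∨ t = b) := by
    intro t; simp [hc]; tauto
  rw [hsupp] at hu hw
  have hedges : ∀ p q : V, s(p,q) ∈ c.edges ↔
      (s(p,q) = s(x,a) ∨ s(p,q) = s(a,y) ∨ s(p,q) = s(y,b) ∨ s(p,q) = s(b,x)) := by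
    intro p q; simp [hc]
  rcases hu with rfl | rfl | rfl | rfl <;> rcases hw with rfl | rfl | rfl | rfl <;>
    first
      | exact (G.irrefl huw)
      | exact nxy huw
      | exact nxy huw.symm
      | exact nab huw
      | exact nab huw.symm
      | (exact hne (by rw [hedges]; simp [Sym2.eq_iff]))

end Cut

section CV
variable {V : Type*} [Fintype V] [DecidableEq V] (G : SimpleGraph V)

lemma cutvec_sum (A B : Finset V) (hdisj : ∀ v, ¬(v ∈ A ∧ v ∈ B)) :
    ∑ u : V, (if u ∈ A then (B.card : ℝ) else if u ∈ B then -(A.card : ℝ) else 0) = 0 := by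
  have h : ∀ u : V, (if u ∈ A then (B.card : ℝ) else if u ∈ B then -(A.card : ℝ) else 0)
      = (if u ∈ A then (B.card : ℝ) else 0) + (if u ∈ B then -(A.card : ℝ) else 0) := by
    intro u
    by_cases hA : u ∈ A
    · rw [if_pos hA, if_pos hA, if_neg (fun hB => hdisj u ⟨hA, hB⟩), add_zero]
    · rw [if_neg hA, if_neg hA, zero_add]
  rw [Finset.sum_congr rfl fun u _ => h u, Finset.sum_add_distrib,
    Finset.sum_ite_mem, Finset.sum_ite_mem, Finset.univ_inter, Finset.univ_inter,
    Finset.sum_const, Finset.sum_const, nsmul_eq_mul, nsmul_eq_mul]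
  ring

lemma lap_cutvec (Sf A B : Finset V)
    (hpart : ∀ v : V, (v ∈ A ∨ v ∈ B) ↔ v ∉ Sf)
    (hdisj : ∀ v, ¬(v ∈ A ∧ v ∈ B))
    (huniv : ∀ v ∈ Sf, ∀ w, w ≠ v → G.Adj v w)
    (hnoedge : ∀ a ∈ A, ∀ b ∈ B, ¬ G.Adj a b) :
    G.lapMatrix ℝ *ᵥ
        (fun v => if v ∈ A then (B.card : ℝ) else if v ∈ B then -(A.card : ℝ) else 0)
      = (Sf.card : ℝ) •
        (fun v => if v ∈ A then (B.card : ℝ) else if v ∈ B then -(A.card : ℝ) else 0) := by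
  set y : V → ℝ := fun v => if v ∈ A then (B.card : ℝ) else if v ∈ B then -(A.card : ℝ) else 0
    with hy
  funext v
  rw [SimpleGraph.lapMatrix_mulVec_apply, Pi.smul_apply, smul_eq_mul]
  by_cases hvS : v ∈ Sf
  · have hvA : v ∉ A := fun h => (hpart v).mp (Or.inl h) hvS
    have hvB : v ∉ B := fun h => (hpart v).mp (Or.inr h) hvS
    have hyv : y v = 0 := by simp [hy, hvA, hvB]
    have hnb : G.neighborFinset v = Finset.univ.erase v := by
      ext u
      simp only [SimpleGraph.mem_neighborFinset, Finset.mem_erase, Finset.mem_univ, and_true]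
      exact ⟨fun h => h.ne', fun h => huniv v hvS u h⟩
    rw [hyv, hnb, Finset.sum_erase_eq_sub (Finset.mem_univ v), cutvec_sum A B hdisj, hyv]
    ring
  · -- v ∈ A or v ∈ B
    have hvAB : v ∈ A ∨ v ∈ B := (hpart v).mpr hvS
    rcases hvAB with hvA | hvB
    · have hyv : y v = (B.card : ℝ) := by simp [hy, hvA]
      have hnoB : ∀ u ∈ G.neighborFinset v, u ∉ B := fun u hu hB =>
        hnoedge v hvA u hB ((SimpleGraph.mem_neighborFinset _ _ _).mp hu)
      have hsumn : ∑ u ∈ G.neighborFinset v, y u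
          = (((G.neighborFinset v) ∩ A).card : ℝ) * (B.card : ℝ) := by
        rw [Finset.sum_congr rfl (fun u hu => show y u = if u ∈ A then (B.card:ℝ) else 0 from by
          by_cases hA : u ∈ A
          · simp [hy, hA]
          · simp only [hy]
            rw [if_neg hA, if_neg (hnoB u hu), if_neg hA]), Finset.sum_ite_mem, Finset.inter_comm,
          Finset.sum_const, nsmul_eq_mul, Finset.inter_comm]
      have hnb : G.neighborFinset v = ((G.neighborFinset v) ∩ A) ∪ Sf := by
        ext u
        simp only [Finset.mem_union, Finset.mem_inter, SimpleGraph.mem_neighborFinset]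
        constructor
        · intro h
          by_cases hu : u ∈ Sf
          · exact Or.inr hu
          · rcases (hpart u).mpr hu with h1 | h1
            · exact Or.inl ⟨h, h1⟩
            · exact absurd h (hnoedge v hvA u h1)
        · rintro (⟨h, _⟩ | h)
          · exact h
          · exact (huniv u h v (fun hh => ((hpart v).mp (Or.inl hvA)) (hh ▸ h))).symm
      have hdisj2 : Disjoint ((G.neighborFinset v) ∩ A) Sf := by
        rw [Finset.disjoint_left]
        intro u hu huS
        exact ((hpart u).mp (Or.inl (Finset.mem_inter.mp hu).2)) huS
      have hcard : (G.neighborFinset v).card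
          = ((G.neighborFinset v) ∩ A).card + Sf.card := by
        conv_lhs => rw [hnb]
        exact Finset.card_union_of_disjoint hdisj2
      have hdeg : (G.degree v : ℝ)
          = (((G.neighborFinset v) ∩ A).card : ℝ) + (Sf.card : ℝ) := by
        rw [← SimpleGraph.card_neighborFinset_eq_degree, hcard]
        push_cast
        ring
      rw [hyv, hsumn, hdeg]
      ring
    · have hvA : v ∉ A := fun h => hdisj v ⟨h, hvB⟩
      have hyv : y v = -(A.card : ℝ) := by
        simp only [hy]
        rw [if_neg hvA, if_pos hvB]
      have hnoA : ∀ u ∈ G.neighborFinset v, u ∉ A := fun u hu hA =>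
        hnoedge u hA v hvB ((SimpleGraph.mem_neighborFinset _ _ _).mp hu).symm
      have hsumn : ∑ u ∈ G.neighborFinset v, y u
          = (((G.neighborFinset v) ∩ B).card : ℝ) * (-(A.card : ℝ)) := by
        rw [Finset.sum_congr rfl (fun u hu => show y u = if u ∈ B then -(A.card:ℝ) else 0 from by
          by_cases hB : u ∈ B
          · have hA' : u ∉ A := fun h => hdisj u ⟨h, hB⟩
            simp only [hy]
            rw [if_neg hA']
          · simp only [hy]
            rw [if_neg (hnoA u hu)]), Finset.sum_ite_mem, Finset.inter_comm,
          Finset.sum_const, nsmul_eq_mul, Finset.inter_comm]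
      have hnb : G.neighborFinset v = ((G.neighborFinset v) ∩ B) ∪ Sf := by
        ext u
        simp only [Finset.mem_union, Finset.mem_inter, SimpleGraph.mem_neighborFinset]
        constructor
        · intro h
          by_cases hu : u ∈ Sf
          · exact Or.inr hu
          · rcases (hpart u).mpr hu with h1 | h1
            · exact absurd h.symm (hnoedge u h1 v hvB)
            · exact Or.inl ⟨h, h1⟩
        · rintro (⟨h, _⟩ | h)
          · exact h
          · exact (huniv u h v (fun hh => ((hpart v).mp (Or.inr hvB)) (hh ▸ h))).symm
      have hdisj2 : Disjoint ((G.neighborFinset v) ∩ B) Sf := by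
        rw [Finset.disjoint_left]
        intro u hu huS
        exact ((hpart u).mp (Or.inr (Finset.mem_inter.mp hu).2)) huS
      have hcard : (G.neighborFinset v).card
          = ((G.neighborFinset v) ∩ B).card + Sf.card := by
        conv_lhs => rw [hnb]
        exact Finset.card_union_of_disjoint hdisj2
      have hdeg : (G.degree v : ℝ)
          = (((G.neighborFinset v) ∩ B).card : ℝ) + (Sf.card : ℝ) := by
        rw [← SimpleGraph.card_neighborFinset_eq_degree, hcard]
        push_cast
        ring
      rw [hyv, hsumn, hdeg]
      ring

end CV

section Mid
variable {V : Type*} [Fintype V] [DecidableEq V] (G : SimpleGraph V)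

lemma sum_sq_sub (t : Finset V) (c : ℝ) (z : V → ℝ) :
    ∑ j ∈ t, (c - z j)^2 =
      (t.card : ℝ) * c^2 - 2*c*(∑ j ∈ t, z j) + ∑ j ∈ t, (z j)^2 := by
  have h : ∀ j ∈ t, (c - z j)^2 = c^2 - 2*c*z j + (z j)^2 := fun j _ => by ring
  rw [Finset.sum_congr rfl h, Finset.sum_add_distrib, Finset.sum_sub_distrib,
    Finset.sum_const, ← Finset.mul_sum, nsmul_eq_mul]

-- lower bound for graphs with a set of universal vertices
lemma quad_ge_of_universal (Sf : Finset V)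
    (huniv : ∀ v ∈ Sf, ∀ w, w ≠ v → G.Adj v w)
    {z : V → ℝ} (hsum : ∑ i, z i = 0) :
    2 * (Sf.card : ℝ) * (∑ i, (z i)^2) ≤
      ∑ i : V, ∑ j : V, (if G.Adj i j then (z i - z j)^2 else 0) := by
  classical
  set n : ℝ := (Fintype.card V : ℝ) with hn
  set s : ℝ := (Sf.card : ℝ) with hs
  set P : ℝ := ∑ i, (z i)^2 with hP
  set PS : ℝ := ∑ i ∈ Sf, (z i)^2 with hPS
  set aS : ℝ := ∑ i ∈ Sf, z i with haS
  have key : ∀ i j : V,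
      (if i ∈ Sf then (z i - z j)^2 else 0) + (if j ∈ Sf then (z i - z j)^2 else 0)
        - (if i ∈ Sf ∧ j ∈ Sf then (z i - z j)^2 else 0)
      ≤ (if G.Adj i j then (z i - z j)^2 else 0) := by
    intro i j
    by_cases hij : i = j
    · subst hij
      by_cases hi : i ∈ Sf <;> simp [hi]
    · by_cases hi : i ∈ Sf
      · have hadj : G.Adj i j := huniv i hi j (Ne.symm hij)
        by_cases hj : j ∈ Sf <;> simp [hi, hj, hadj, le_refl]
      · by_cases hj : j ∈ Sf
        · have hadj : G.Adj i j := ((huniv j hj i hij).symm)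
          simp [hi, hj, hadj, le_refl]
        · rw [if_neg hi, if_neg hj, if_neg (fun h : i ∈ Sf ∧ j ∈ Sf => hi h.1)]
          by_cases hadj : G.Adj i j <;> simp [hadj, sq_nonneg]
  have h1 : ∑ i : V, ∑ j : V, (if i ∈ Sf then (z i - z j)^2 else 0)
      = n * PS + s * P := by
    have : ∀ i : V, ∑ j : V, (if i ∈ Sf then (z i - z j)^2 else 0)
        = if i ∈ Sf then (n * (z i)^2 + P) else 0 := by
      intro i
      by_cases hi : i ∈ Sf
      · simp only [if_pos hi]
        rw [show (∑ j : V, (z i - z j)^2) = n * (z i)^2 - 2*(z i)*(∑ j, z j) + P from by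
          rw [sum_sq_sub Finset.univ (z i) z]; simp [hn, hP], hsum]
        ring
      · simp [hi]
    rw [Finset.sum_congr rfl (fun i _ => this i)]
    rw [Finset.sum_ite_mem, Finset.univ_inter, Finset.sum_add_distrib,
      ← Finset.mul_sum, Finset.sum_const, nsmul_eq_mul]
  have h2 : ∑ i : V, ∑ j : V, (if j ∈ Sf then (z i - z j)^2 else 0)
      = n * PS + s * P := by
    rw [Finset.sum_comm]
    rw [← h1]
    exact Finset.sum_congr rfl fun j _ => Finset.sum_congr rfl fun i _ => by
      rw [show (z i - z j)^2 = (z j - z i)^2 from by ring]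
  have h3 : ∑ i : V, ∑ j : V, (if i ∈ Sf ∧ j ∈ Sf then (z i - z j)^2 else 0)
      = 2 * s * PS - 2 * aS^2 := by
    have : ∀ i : V, ∑ j : V, (if i ∈ Sf ∧ j ∈ Sf then (z i - z j)^2 else 0)
        = if i ∈ Sf then (s * (z i)^2 - 2*(z i)*aS + PS) else 0 := by
      intro i
      by_cases hi : i ∈ Sf
      · have hcond : ∀ j : V, ((i ∈ Sf ∧ j ∈ Sf) ↔ (j ∈ Sf)) := fun j => by simp [hi]
        rw [if_pos hi]
        rw [Finset.sum_congr rfl (fun j _ => by rw [if_congr (hcond j) rfl rfl])]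
        rw [show (∑ j : V, if j ∈ Sf then (z i - z j)^2 else 0)
            = ∑ j ∈ Sf, (z i - z j)^2 from by rw [Finset.sum_ite_mem, Finset.univ_inter]]
        rw [sum_sq_sub Sf (z i) z]
      · simp [hi]
    rw [Finset.sum_congr rfl (fun i _ => this i)]
    rw [Finset.sum_ite_mem, Finset.univ_inter]
    rw [Finset.sum_add_distrib, Finset.sum_sub_distrib]
    rw [← Finset.mul_sum, Finset.sum_const, nsmul_eq_mul]
    have h4 : ∑ i ∈ Sf, 2 * z i * aS = 2 * aS^2 := by
      rw [← Finset.sum_mul, ← Finset.mul_sum, ← haS]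
      ring
    rw [h4]
    simp only [← hPS, ← hs]
    ring
  have hbig : 2*(n * PS + s * P) - (2 * s * PS - 2 * aS^2)
      ≤ ∑ i : V, ∑ j : V, (if G.Adj i j then (z i - z j)^2 else 0) := by
    calc 2*(n * PS + s * P) - (2 * s * PS - 2 * aS^2)
        = ∑ i : V, ∑ j : V, ((if i ∈ Sf then (z i - z j)^2 else 0)
            + (if j ∈ Sf then (z i - z j)^2 else 0)
            - (if i ∈ Sf ∧ j ∈ Sf then (z i - z j)^2 else 0)) := by
          simp only [Finset.sum_sub_distrib, Finset.sum_add_distrib, h1, h2, h3]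
          ring
      _ ≤ _ := Finset.sum_le_sum fun i _ => Finset.sum_le_sum fun j _ => key i j
  have hPSnn : 0 ≤ PS := Finset.sum_nonneg fun i _ => sq_nonneg _
  have hsn : s ≤ n := by
    rw [hs, hn]
    exact_mod_cast Finset.card_le_card (Finset.subset_univ Sf)
  have hPnn : 0 ≤ P := Finset.sum_nonneg fun i _ => sq_nonneg _
  have hs0 : 0 ≤ s := by rw [hs]; positivity
  nlinarith [sq_nonneg aS, mul_nonneg (sub_nonneg.mpr hsn) hPSnn, mul_nonneg hs0 hPnn]

end Mid

section Main
variable {V : Type*} [Fintype V] [DecidableEq V] (G : SimpleGraph V)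

lemma exists_nonadj (hnc : G ≠ ⊤) : ∃ u v : V, u ≠ v ∧ ¬ G.Adj u v := by
  by_contra h
  push_neg at h
  apply hnc
  ext u v
  simp only [SimpleGraph.top_adj]
  exact ⟨fun h' => h'.ne, fun h' => h u v h'⟩

lemma kappa_set_nonempty (hnc : G ≠ ⊤) :
    {k | ∃ S : Finset V, S.card = k ∧ ¬ (G.induce ((↑S : Set V)ᶜ)).Preconnected}.Nonempty := by
  obtain ⟨u, v, huv, hnadj⟩ := exists_nonadj G hnc
  refine ⟨(Finset.univ \ {u, v}).card, Finset.univ \ {u, v}, rfl, ?_⟩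
  intro hpre
  have hu : u ∈ ((↑(Finset.univ \ ({u, v} : Finset V)) : Set V)ᶜ) := by simp
  have hv : v ∈ ((↑(Finset.univ \ ({u, v} : Finset V)) : Set V)ᶜ) := by simp
  have hbot : G.induce ((↑(Finset.univ \ ({u, v} : Finset V)) : Set V)ᶜ) = ⊥ := by
    ext ⟨x, hx⟩ ⟨y, hy⟩
    simp only [SimpleGraph.comap_adj, Function.Embedding.coe_subtype, SimpleGraph.bot_adj,
      iff_false]
    have hx' : x = u ∨ x = v := or_iff_not_imp_left.mpr (by simpa using hx)
    have hy' : y = u ∨ y = v := or_iff_not_imp_left.mpr (by simpa using hy)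
    rcases hx' with rfl | rfl <;> rcases hy' with rfl | rfl <;> intro hadj
    · exact G.irrefl hadj
    · exact hnadj hadj
    · exact hnadj hadj.symm
    · exact G.irrefl hadj
  rw [hbot] at hpre
  have := SimpleGraph.reachable_bot.mp (hpre ⟨u, hu⟩ ⟨v, hv⟩)
  exact huv (by simpa using this)

lemma subset_of_separator (S : Set V) (huniv : ∀ v ∈ S, ∀ w, w ≠ v → G.Adj v w)
    (T : Finset V) (hT : ¬ (G.induce ((↑T : Set V)ᶜ)).Preconnected) : S ⊆ ↑T := by
  intro s hs
  by_contra hsT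
  apply hT
  have hsmem : s ∈ ((↑T : Set V)ᶜ) := hsT
  have hub : ∀ z : ↥((↑T : Set V)ᶜ), (G.induce ((↑T : Set V)ᶜ)).Reachable ⟨s, hsmem⟩ z := by
    intro z
    by_cases hz : z.1 = s
    · rw [show z = ⟨s, hsmem⟩ from Subtype.ext hz]
    · refine SimpleGraph.Adj.reachable ?_
      simp only [SimpleGraph.comap_adj, Function.Embedding.coe_subtype]
      exact huniv s hs z.1 hz
  intro x y
  exact (hub x).symm.trans (hub y)

lemma empty_not_separator (hconn : G.Connected) : ¬ IsSeparator G (∅ : Set V) := by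
  intro h
  apply h
  rw [Set.compl_empty]
  intro x y
  have hr : G.Reachable x.1 y.1 := hconn.preconnected x.1 y.1
  have := SimpleGraph.Reachable.map (G.induceUnivIso).symm.toHom hr
  convert this <;> exact Subtype.ext rfl

end Main

/-- A non-complete connected chordal graph satisfies `κ(G) = a(G)` iff it has a
minimal separator all of whose elements are universal vertices. -/
theorem stmt_5 {V : Type*} [Fintype V] [DecidableEq V] (G : SimpleGraph V)
    (hconn : G.Connected) (hnc : G ≠ ⊤) (hch : IsChordal G) :
    (vertexConnectivity G : ℝ) = algConn G ↔
      ∃ S : Set V, IsMinimalSeparator G S ∧ ∀ v ∈ S, ∀ w, w ≠ v → G.Adj v w := by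
  have hκdef : vertexConnectivity G
      = sInf {k | ∃ S : Finset V, S.card = k ∧ ¬ (G.induce ((↑S : Set V)ᶜ)).Preconnected} := rfl
  have haCdef : algConn G
      = sInf {μ : ℝ | μ ≠ 0 ∧ ∃ y : V → ℝ, y ≠ 0 ∧ G.lapMatrix ℝ *ᵥ y = μ • y} := rfl
  constructor
  · -- forward direction
    intro hk
    have hne := kappa_set_nonempty G hnc
    have hmem := Nat.sInf_mem hne
    obtain ⟨Sf, hcard, hsepf⟩ := hmem
    rw [← hκdef] at hcard
    obtain ⟨A, B, hA, hB, hpart, hdisj, hnoedge⟩ :=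
      separator_parts G (show IsSeparator G (↑Sf : Set V) from hsepf)
    have hpart' : ∀ v : V, (v ∈ A ∨ v ∈ B) ↔ v ∉ Sf := fun v => (hpart v).trans (by simp)
    set y : V → ℝ := fun v => if v ∈ A then (B.card : ℝ) else if v ∈ B then -(A.card : ℝ) else 0
      with hy
    have hsum : ∑ i, y i = 0 := cutvec_sum A B hdisj
    obtain ⟨a0, ha0⟩ := hA
    obtain ⟨b0, hb0⟩ := hB
    have hBpos : (0:ℝ) < B.card := by exact_mod_cast Finset.card_pos.mpr ⟨b0, hb0⟩
    have hApos : (0:ℝ) < A.card := by exact_mod_cast Finset.card_pos.mpr ⟨a0, ha0⟩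
    have hy0 : y ≠ 0 := by
      intro h
      have h2 : (B.card : ℝ) = 0 := by simpa [hy, ha0] using congrFun h a0
      linarith
    have hray := algConn_le_rayleigh G hconn hy0 hsum
    rw [← hk, quadForm_eq G y] at hray
    have yA : ∀ v ∈ A, y v = (B.card : ℝ) := fun v h => by simp [hy, h]
    have yB : ∀ v ∈ B, y v = -(A.card : ℝ) := fun v h => by
      have hvA : v ∉ A := fun h2 => hdisj v ⟨h2, h⟩
      simp only [hy]; rw [if_neg hvA, if_pos h]
    have yS : ∀ v ∈ Sf, y v = 0 := fun v h => by
      have h1 : v ∉ A := fun h2 => (hpart' v).mp (Or.inl h2) h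
      have h2 : v ∉ B := fun h2 => (hpart' v).mp (Or.inr h2) h
      simp only [hy]; rw [if_neg h1, if_neg h2]
    have hP : y ⬝ᵥ y = ∑ j, (if j ∉ Sf then (y j)^2 else 0) := by
      simp only [dotProduct]
      refine Finset.sum_congr rfl fun j _ => ?_
      by_cases hj : j ∈ Sf
      · rw [if_neg (by simpa using hj), yS j hj]; ring
      · rw [if_pos hj]; ring
    have hadjS : ∀ s ∈ Sf, ∀ w, (w ∈ A ∨ w ∈ B) → G.Adj s w := by
      by_contra hcon
      push_neg at hcon
      obtain ⟨s0, hs0, w0, hw0, hnadj⟩ := hcon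
      set gg : V → V → ℝ := fun i j =>
        (if i ∈ Sf ∧ j ∉ Sf then (y j)^2 else 0) + (if j ∈ Sf ∧ i ∉ Sf then (y i)^2 else 0)
        with hgg
      have hgnn : ∀ i j, 0 ≤ gg i j := by
        intro i j
        refine add_nonneg ?_ ?_ <;> split <;> positivity
      have hfg : ∀ i j : V, (if G.Adj i j then (y i - y j)^2 else 0) ≤ gg i j := by
        intro i j
        by_cases hadj : G.Adj i j
        case neg => rw [if_neg hadj]; exact hgnn i j
        rw [if_pos hadj]
        by_cases hiS : i ∈ Sf <;> by_cases hjS : j ∈ Sf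
        · rw [yS i hiS, yS j hjS]; simpa using hgnn i j
        · have hq : gg i j = (y j)^2 := by
            simp only [hgg]
            rw [if_pos ⟨hiS, hjS⟩, if_neg (fun hh => hjS hh.1), add_zero]
          rw [hq, yS i hiS]
          exact le_of_eq (by ring)
        · have hq : gg i j = (y i)^2 := by
            simp only [hgg]
            rw [if_neg (fun hh => hiS hh.1), if_pos ⟨hjS, hiS⟩, zero_add]
          rw [hq, yS j hjS]
          exact le_of_eq (by ring)
        · rcases (hpart' i).mpr hiS with hiA | hiB <;> rcases (hpart' j).mpr hjS with hjA | hjB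
          · rw [yA i hiA, yA j hjA]; simpa using hgnn i j
          · exact absurd hadj (hnoedge i hiA j hjB)
          · exact absurd hadj.symm (hnoedge j hjA i hiB)
          · rw [yB i hiB, yB j hjB]; simpa using hgnn i j
      have hw0S : w0 ∉ Sf := (hpart' w0).mp hw0
      have hstrict : (if G.Adj s0 w0 then (y s0 - y w0)^2 else 0) < gg s0 w0 := by
        rw [if_neg hnadj]
        simp only [hgg]
        have h1 : (0:ℝ) < (y w0)^2 := by
          rcases hw0 with h | h
          · rw [yA w0 h]; exact pow_pos hBpos 2
          · rw [yB w0 h, neg_sq]; exact pow_pos hApos 2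
        have h2 : (0:ℝ) ≤ if w0 ∈ Sf ∧ s0 ∉ Sf then (y s0)^2 else 0 := by
          split <;> positivity
        rw [if_pos ⟨hs0, hw0S⟩]
        linarith
      have hsum_lt : (∑ i : V, ∑ j : V, (if G.Adj i j then (y i - y j)^2 else 0))
          < ∑ i : V, ∑ j : V, gg i j := by
        refine Finset.sum_lt_sum (fun i _ => Finset.sum_le_sum fun j _ => hfg i j)
          ⟨s0, Finset.mem_univ _, ?_⟩
        exact Finset.sum_lt_sum (fun j _ => hfg s0 j) ⟨w0, Finset.mem_univ _, hstrict⟩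
      have hsplit : ∀ (c : V → ℝ), ∑ i : V, ∑ j : V, (if i ∈ Sf ∧ j ∉ Sf then c j else 0)
          = (Sf.card : ℝ) * ∑ j, (if j ∉ Sf then c j else 0) := by
        intro c
        have h1 : ∀ i : V, ∑ j : V, (if i ∈ Sf ∧ j ∉ Sf then c j else 0)
            = if i ∈ Sf then (∑ j, if j ∉ Sf then c j else 0) else 0 := by
          intro i
          by_cases hi : i ∈ Sf
          · rw [if_pos hi]
            exact Finset.sum_congr rfl fun j _ => by rw [if_congr (and_iff_right hi) rfl rfl]
          · rw [if_neg hi]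
            exact Finset.sum_eq_zero fun j _ => by rw [if_neg (fun hh => hi hh.1)]
        rw [Finset.sum_congr rfl fun i _ => h1 i, Finset.sum_ite_mem, Finset.univ_inter,
          Finset.sum_const, nsmul_eq_mul]
      have hggsum : ∑ i : V, ∑ j : V, gg i j = 2 * (Sf.card : ℝ) * (y ⬝ᵥ y) := by
        simp only [hgg]
        rw [Finset.sum_congr rfl fun i (_ : i ∈ Finset.univ) => Finset.sum_add_distrib,
          Finset.sum_add_distrib, hsplit (fun j => (y j)^2)]
        conv_lhs => rw [Finset.sum_comm]
        rw [hsplit (fun i => (y i)^2), ← hP]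
        ring
      rw [hggsum] at hsum_lt
      have hcast : (Sf.card : ℝ) = (vertexConnectivity G : ℝ) := by exact_mod_cast hcard
      rw [hcast] at hsum_lt
      linarith
    refine ⟨(↑Sf : Set V), ⟨hsepf, ?_⟩, ?_⟩
    · rintro T hT hTsep
      have h1 : vertexConnectivity G ≤ T.toFinset.card := by
        rw [hκdef]
        exact Nat.sInf_le ⟨T.toFinset, rfl, by rw [Set.coe_toFinset]; exact hTsep⟩
      have h2 : T.toFinset ⊂ Sf := by
        have h3 := Set.toFinset_ssubset_toFinset.mpr hT
        rwa [Finset.toFinset_coe] at h3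
      have h3 := Finset.card_lt_card h2
      omega
    · intro v hv w hw
      have hvS : v ∈ Sf := hv
      by_cases hwS : w ∈ Sf
      · by_contra hnadj
        have h1 : G.Adj v a0 := hadjS v hvS a0 (Or.inl ha0)
        have h2 : G.Adj a0 w := (hadjS w hwS a0 (Or.inl ha0)).symm
        have h3 : G.Adj w b0 := hadjS w hwS b0 (Or.inr hb0)
        have h4 : G.Adj b0 v := (hadjS v hvS b0 (Or.inr hb0)).symm
        exact no_induced_c4 G hch h1 h2 h3 h4 (Ne.symm hw)
          (fun hh => hdisj a0 ⟨ha0, hh ▸ hb0⟩) hnadj (hnoedge a0 ha0 b0 hb0)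
      · exact hadjS v hvS w ((hpart' w).mpr hwS)

  · -- backward direction
    rintro ⟨S, ⟨hsep, _hmin⟩, huniv⟩
    have hSne : S.Nonempty := by
      rcases Set.eq_empty_or_nonempty S with rfl | h
      · exact absurd hsep (empty_not_separator G hconn)
      · exact h
    set Sf : Finset V := S.toFinset with hSf
    have hSf_sep : ¬ (G.induce ((↑Sf : Set V)ᶜ)).Preconnected := by
      rw [hSf, Set.coe_toFinset]; exact hsep
    have huniv' : ∀ v ∈ Sf, ∀ w, w ≠ v → G.Adj v w := fun v hv =>
      huniv v (by rw [hSf] at hv; exact Set.mem_toFinset.mp hv)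
    -- vertex connectivity equals |S|
    have hκ : vertexConnectivity G = Sf.card := by
      refine le_antisymm (hκdef ▸ Nat.sInf_le ⟨Sf, rfl, hSf_sep⟩) ?_
      rw [hκdef]
      refine le_csInf ⟨Sf.card, Sf, rfl, hSf_sep⟩ ?_
      rintro k ⟨T, rfl, hT⟩
      have hsub : S ⊆ ↑T := subset_of_separator G S huniv T hT
      have hsub' : Sf ⊆ T := fun x hx => hsub (by rw [hSf] at hx; exact Set.mem_toFinset.mp hx)
      exact Finset.card_le_card hsub'
    -- algebraic connectivity equals |S|
    obtain ⟨A, B, hA, hB, hpart, hdisj, hnoedge⟩ := separator_parts G hsep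
    have hpart' : ∀ v : V, (v ∈ A ∨ v ∈ B) ↔ v ∉ Sf := fun v =>
      (hpart v).trans (by rw [hSf]; simp)
    set y : V → ℝ := fun v => if v ∈ A then (B.card : ℝ) else if v ∈ B then -(A.card : ℝ) else 0
      with hy
    have heig : G.lapMatrix ℝ *ᵥ y = (Sf.card : ℝ) • y :=
      lap_cutvec G Sf A B hpart' hdisj huniv' hnoedge
    obtain ⟨a0, ha0⟩ := hA
    have hBpos : (0:ℝ) < B.card := by exact_mod_cast Finset.card_pos.mpr hB
    have hy0 : y ≠ 0 := by
      intro h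
      have h2 : (B.card : ℝ) = 0 := by simpa [hy, ha0] using congrFun h a0
      linarith
    have hs0 : (Sf.card : ℝ) ≠ 0 := by
      have : Sf.Nonempty := by
        obtain ⟨s, hs⟩ := hSne
        exact ⟨s, by rw [hSf]; exact Set.mem_toFinset.mpr hs⟩
      have := Finset.card_pos.mpr this
      positivity
    have hmemb : (Sf.card : ℝ)
        ∈ {μ : ℝ | μ ≠ 0 ∧ ∃ y : V → ℝ, y ≠ 0 ∧ G.lapMatrix ℝ *ᵥ y = μ • y} :=
      ⟨hs0, y, hy0, heig⟩
    have hle : algConn G ≤ (Sf.card : ℝ) := by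
      rw [haCdef]; exact csInf_le (algConn_bddBelow G) hmemb
    have hge : (Sf.card : ℝ) ≤ algConn G := by
      rw [haCdef]
      refine le_csInf ⟨_, hmemb⟩ ?_
      rintro μ ⟨hμ0, z, hz0, hez⟩
      have hsumz : ∑ i, z i = 0 := sum_eq_zero_of_eigen G hμ0 hez
      have hq := quad_ge_of_universal G Sf huniv' hsumz
      have hQ : z ⬝ᵥ (G.lapMatrix ℝ *ᵥ z) = μ * (z ⬝ᵥ z) := by
        rw [hez]
        simp only [dotProduct, Pi.smul_apply, smul_eq_mul, Finset.mul_sum]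
        exact Finset.sum_congr rfl (fun i _ => by ring)
      have hzz : z ⬝ᵥ z = ∑ i, (z i)^2 := by
        simp only [dotProduct]
        exact Finset.sum_congr rfl (fun i _ => by ring)
      have hPpos : 0 < z ⬝ᵥ z := dot_self_pos hz0
      have hq2 : μ * (z ⬝ᵥ z) ≥ (Sf.card : ℝ) * (z ⬝ᵥ z) := by
        rw [← hQ] at *
        rw [quadForm_eq G z]
        rw [hzz]
        linarith
      nlinarith
    have : algConn G = (Sf.card : ℝ) := le_antisymm hle hge
    rw [this, hκ]
end

section
/- Let G be a chordal graph in which the set of minimal vertex separators, ordered by inclusion, forms a chain (i.e., any two minimal vertex separators are comparable), and suppose the smallest one consists of universal vertices. Then a(G) = κ(G). -/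
open SimpleGraph Matrix

open scoped Classical

/-- `S` separates the vertices `u` and `v`. -/
def SeparatesPair {V : Type*} (G : SimpleGraph V) (S : Set V) (u v : V) : Prop :=
  u ∉ S ∧ v ∉ S ∧ ∀ p : G.Walk u v, ∃ w ∈ p.support, w ∈ S

/-- `S` is a minimal vertex separator of `G`. -/
def IsMinimalVertexSeparator {V : Type*} (G : SimpleGraph V) (S : Set V) : Prop :=
  ∃ u v, u ≠ v ∧ ¬ G.Adj u v ∧ SeparatesPair G S u v ∧ ∀ T ⊂ S, ¬ SeparatesPair G T u v

-- quadratic expansion over a finset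
lemma aux_expand {V : Type*} [Fintype V] (s : Finset V) (y : V → ℝ) :
    ∑ i ∈ s, ∑ j ∈ s, (y i - y j)^2
      = 2 * s.card * (∑ i ∈ s, (y i)^2) - 2 * (∑ i ∈ s, y i)^2 := by
  have : ∀ i ∈ s, ∑ j ∈ s, (y i - y j)^2
      = s.card * (y i)^2 - 2 * y i * (∑ j ∈ s, y j) + ∑ j ∈ s, (y j)^2 := by
    intro i _
    rw [Finset.sum_congr rfl (fun j _ => by ring :
      ∀ j ∈ s, (y i - y j)^2 = (y i)^2 - 2 * y i * y j + (y j)^2)]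
    rw [Finset.sum_add_distrib, Finset.sum_sub_distrib, Finset.sum_const, ← Finset.mul_sum]
    push_cast
    ring
  rw [Finset.sum_congr rfl this, Finset.sum_add_distrib, Finset.sum_sub_distrib,
    Finset.sum_const, ← Finset.sum_mul, ← Finset.mul_sum]
  push_cast
  rw [← Finset.mul_sum]
  ring

lemma aux_lower {V : Type*} [Fintype V] [DecidableEq V] (G : SimpleGraph V)
    (S₀ : Set V) (huniv : ∀ v ∈ S₀, ∀ w, w ≠ v → G.Adj v w)
    (μ : ℝ) (y : V → ℝ) (hy : y ≠ 0) (hμ : μ ≠ 0)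
    (heig : G.lapMatrix ℝ *ᵥ y = μ • y) : (S₀.toFinset.card : ℝ) ≤ μ := by
  classical
  set n := Fintype.card V with hn
  set k := S₀.toFinset.card with hk
  -- sum of y is zero
  have hcol : ∀ j : V, ∑ i : V, G.lapMatrix ℝ i j = 0 := by
    intro j
    have h1 := congrFun (G.lapMatrix_mulVec_const_eq_zero (R := ℝ)) j
    simp only [mulVec, dotProduct, mul_one, Pi.zero_apply] at h1
    calc ∑ i : V, G.lapMatrix ℝ i j = ∑ i : V, G.lapMatrix ℝ j i := by
          refine Finset.sum_congr rfl fun i _ => ?_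
          exact (G.isSymm_lapMatrix (R := ℝ)).apply j i
      _ = 0 := h1
  have hsum : ∑ i : V, y i = 0 := by
    have h2 : ∑ i : V, (G.lapMatrix ℝ *ᵥ y) i = 0 := by
      simp only [mulVec, dotProduct]
      rw [Finset.sum_comm]
      rw [Finset.sum_congr rfl (fun j _ => by rw [← Finset.sum_mul, hcol j, zero_mul] :
        ∀ j ∈ Finset.univ, ∑ i : V, G.lapMatrix ℝ i j * y j = 0)]
      simp
    rw [heig] at h2
    simp only [Pi.smul_apply, smul_eq_mul, ← Finset.mul_sum] at h2
    exact (mul_eq_zero.mp h2).resolve_left hμ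
  -- quadratic form
  have hquad : dotProduct y (G.lapMatrix ℝ *ᵥ y) = μ * ∑ i : V, (y i)^2 := by
    rw [heig]
    simp only [dotProduct, Pi.smul_apply, smul_eq_mul, Finset.mul_sum]
    exact Finset.sum_congr rfl fun i _ => by ring
  have hquad2 : μ * ∑ i : V, (y i)^2
      = (∑ i : V, ∑ j : V, if G.Adj i j then (y i - y j)^2 else 0) / 2 := by
    rw [← hquad, ← Matrix.toLinearMap₂'_apply', G.lapMatrix_toLinearMap₂' (R := ℝ) y]
  -- split the full sum
  have hsplit : (∑ i : V, ∑ j : V, if G.Adj i j then (y i - y j)^2 else 0)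
      = (∑ i : V, ∑ j : V, (y i - y j)^2)
        - ∑ i : V, ∑ j : V, if G.Adj i j then 0 else (y i - y j)^2 := by
    rw [eq_sub_iff_add_eq, ← Finset.sum_add_distrib]
    refine Finset.sum_congr rfl fun i _ => ?_
    rw [← Finset.sum_add_distrib]
    refine Finset.sum_congr rfl fun j _ => ?_
    by_cases h : G.Adj i j <;> simp [h]
  -- bound the complement sum
  set Wf : Finset V := S₀.toFinsetᶜ with hWf
  have hcompl : (∑ i : V, ∑ j : V, if G.Adj i j then 0 else (y i - y j)^2)
      ≤ ∑ i ∈ Wf, ∑ j ∈ Wf, (y i - y j)^2 := by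
    have : (∑ i : V, ∑ j : V, if G.Adj i j then 0 else (y i - y j)^2)
        ≤ ∑ i : V, ∑ j : V, if i ∈ Wf ∧ j ∈ Wf then (y i - y j)^2 else 0 := by
      refine Finset.sum_le_sum fun i _ => Finset.sum_le_sum fun j _ => ?_
      by_cases h : G.Adj i j
      · simp only [h, if_true]
        split <;> positivity
      · by_cases hij : i = j
        · subst hij
          have h0 : (if G.Adj i i then (0:ℝ) else (y i - y i)^2) = 0 := by simp
          rw [h0]
          split <;> positivity
        · have hiW : i ∈ Wf := by
            simp only [hWf, Finset.mem_compl, Set.mem_toFinset]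
            intro hi
            exact h (huniv i hi j (Ne.symm hij))
          have hjW : j ∈ Wf := by
            simp only [hWf, Finset.mem_compl, Set.mem_toFinset]
            intro hj
            exact h ((huniv j hj i hij).symm)
          simp [h, hiW, hjW]
    refine this.trans_eq ?_
    rw [Finset.sum_congr rfl (fun i _ => ?_ :
      ∀ i ∈ Finset.univ, (∑ j : V, if i ∈ Wf ∧ j ∈ Wf then (y i - y j)^2 else 0)
        = if i ∈ Wf then ∑ j ∈ Wf, (y i - y j)^2 else 0)]
    · rw [← Finset.sum_filter, Finset.filter_mem_eq_inter, Finset.univ_inter]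
    · by_cases hi : i ∈ Wf
      · simp only [hi, true_and, if_true]
        rw [← Finset.sum_filter, Finset.filter_mem_eq_inter, Finset.univ_inter]
      · simp [hi]
  -- assemble
  have hWcard : (Wf.card : ℝ) + k = n := by
    show ((S₀.toFinsetᶜ).card : ℝ) + (S₀.toFinset.card : ℝ) = ((Fintype.card V : ℕ) : ℝ)
    exact_mod_cast Finset.card_compl_add_card S₀.toFinset
  have hsqW : ∑ i ∈ Wf, (y i)^2 ≤ ∑ i : V, (y i)^2 :=
    Finset.sum_le_sum_of_subset_of_nonneg (Finset.subset_univ _) (fun i _ _ => sq_nonneg _)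
  have hWbound : ∑ i ∈ Wf, ∑ j ∈ Wf, (y i - y j)^2
      ≤ 2 * Wf.card * ∑ i : V, (y i)^2 := by
    rw [aux_expand]
    have h1 := sq_nonneg (∑ i ∈ Wf, y i)
    have h2 : (0:ℝ) ≤ (Wf.card : ℝ) := Nat.cast_nonneg _
    nlinarith [hsqW]
  have hfull : (∑ i : V, ∑ j : V, (y i - y j)^2) = 2 * n * ∑ i : V, (y i)^2 := by
    rw [aux_expand, hsum, Finset.card_univ]
    ring
  have hpos : 0 < ∑ i : V, (y i)^2 := by
    obtain ⟨i, hi⟩ := Function.ne_iff.mp hy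
    refine Finset.sum_pos' (fun j _ => sq_nonneg _) ⟨i, Finset.mem_univ i, ?_⟩
    have : y i ≠ 0 := hi
    positivity
  have hkey : (k:ℝ) * ∑ i : V, (y i)^2 ≤ μ * ∑ i : V, (y i)^2 := by
    rw [hquad2, hsplit, hfull]
    nlinarith [hcompl, hWbound, hWcard]
  exact le_of_mul_le_mul_right hkey hpos

lemma aux_eigen {V : Type*} [Fintype V] [DecidableEq V] (G : SimpleGraph V)
    (S₀ : Set V) (u v : V)
    (huS : u ∉ S₀) (hvS : v ∉ S₀)
    (hsep : ∀ p : G.Walk u v, ∃ w ∈ p.support, w ∈ S₀)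
    (huniv : ∀ x ∈ S₀, ∀ w, w ≠ x → G.Adj x w) :
    ∃ y : V → ℝ, y ≠ 0 ∧ G.lapMatrix ℝ *ᵥ y = (S₀.toFinset.card : ℝ) • y := by
  classical
  set k := S₀.toFinset.card with hk
  set A : Set V := {x | ∃ q : G.Walk u x, ∀ w ∈ q.support, w ∉ S₀} with hA
  set B : Set V := {x | x ∉ S₀ ∧ x ∉ A} with hB
  set a := A.toFinset.card with ha
  set b := B.toFinset.card with hb
  set y : V → ℝ := fun x => if x ∈ S₀ then 0 else if x ∈ A then (b:ℝ) else -(a:ℝ) with hy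
  have hAS : ∀ x ∈ A, x ∉ S₀ := by
    rintro x ⟨q, hq⟩
    exact hq x q.end_mem_support
  have huA : u ∈ A := by
    refine ⟨Walk.nil, fun w hw => ?_⟩
    simp only [Walk.support_nil, List.mem_singleton] at hw
    subst hw; exact huS
  have hvA : v ∉ A := by
    rintro ⟨q, hq⟩
    obtain ⟨w, hw, hwS⟩ := hsep q
    exact hq w hw hwS
  have hvB : v ∈ B := ⟨hvS, hvA⟩
  have hstep : ∀ x z, x ∈ A → G.Adj x z → z ∉ S₀ → z ∈ A := by
    rintro x z ⟨q, hq⟩ hadj hz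
    refine ⟨q.concat hadj, fun w hw => ?_⟩
    rw [Walk.support_concat, List.mem_append,
      List.mem_singleton] at hw
    rcases hw with h | h
    · exact hq w h
    · subst h; exact hz
  -- values of y
  have hyS : ∀ x ∈ S₀, y x = 0 := fun x hx => by simp [hy, hx]
  have hyA : ∀ x ∈ A, y x = (b:ℝ) := fun x hx => by simp [hy, hAS x hx, hx]
  have hyB : ∀ x ∈ B, y x = -(a:ℝ) := fun x hx => by simp [hy, hx.1, hx.2]
  -- total sum is zero
  have hdAB : Disjoint A.toFinset B.toFinset := by
    rw [Finset.disjoint_left]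
    intro x hx hx'
    rw [Set.mem_toFinset] at hx hx'
    exact hx'.2 hx
  have hdS : Disjoint S₀.toFinset (A.toFinset ∪ B.toFinset) := by
    rw [Finset.disjoint_left]
    intro x hx hx'
    rw [Set.mem_toFinset] at hx
    rw [Finset.mem_union, Set.mem_toFinset, Set.mem_toFinset] at hx'
    rcases hx' with h | h
    · exact hAS x h hx
    · exact h.1 hx
  have hpart : Finset.univ = S₀.toFinset ∪ (A.toFinset ∪ B.toFinset) := by
    ext x
    simp only [Finset.mem_univ, true_iff, Finset.mem_union, Set.mem_toFinset]
    by_cases hx : x ∈ S₀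
    · exact Or.inl hx
    · by_cases hx' : x ∈ A
      · exact Or.inr (Or.inl hx')
      · exact Or.inr (Or.inr ⟨hx, hx'⟩)
  have hsum0 : ∑ x : V, y x = 0 := by
    rw [hpart, Finset.sum_union hdS, Finset.sum_union hdAB]
    rw [Finset.sum_congr rfl (fun x hx => hyS x (Set.mem_toFinset.mp hx)),
      Finset.sum_congr rfl (fun x hx => hyA x (Set.mem_toFinset.mp hx)),
      Finset.sum_congr rfl (fun x hx => hyB x (Set.mem_toFinset.mp hx))]
    simp only [Finset.sum_const, Finset.sum_const_zero, nsmul_eq_mul, ← ha, ← hb]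
    ring
  refine ⟨y, ?_, ?_⟩
  · intro h0
    have hbpos : 0 < b := Finset.card_pos.mpr ⟨v, Set.mem_toFinset.mpr hvB⟩
    have h1 : y u = (b:ℝ) := hyA u huA
    rw [h0] at h1
    simp only [Pi.zero_apply] at h1
    exact Nat.cast_ne_zero.mpr hbpos.ne' h1.symm
  · funext x
    rw [G.lapMatrix_mulVec_apply]
    simp only [Pi.smul_apply, smul_eq_mul]
    by_cases hxS : x ∈ S₀
    · -- x in S₀ : universal vertex
      have hN : G.neighborFinset x = Finset.univ.erase x := by
        ext z
        simp only [mem_neighborFinset, Finset.mem_erase, Finset.mem_univ, and_true]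
        constructor
        · exact fun h => h.ne'
        · exact fun h => huniv x hxS z h
      rw [hN, Finset.sum_erase_eq_sub (Finset.mem_univ x), hsum0, hyS x hxS]
      ring
    · -- x not in S₀
      have hSsub : ∀ s ∈ S₀, G.Adj x s := fun s hs =>
        (huniv s hs x (fun h => hxS (h ▸ hs))).symm
      by_cases hxA : x ∈ A
      · have hN : G.neighborFinset x
            = (G.neighborFinset x).filter (· ∈ A) ∪ S₀.toFinset := by
          ext z
          simp only [Finset.mem_union, Finset.mem_filter, mem_neighborFinset,
            Set.mem_toFinset]
          constructor
          · intro h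
            by_cases hz : z ∈ S₀
            · exact Or.inr hz
            · exact Or.inl ⟨h, hstep x z hxA h hz⟩
          · rintro (⟨h, _⟩ | h)
            · exact h
            · exact (hSsub z h)
        have hdisj : Disjoint ((G.neighborFinset x).filter (· ∈ A)) S₀.toFinset := by
          rw [Finset.disjoint_left]
          intro z hz hz'
          rw [Finset.mem_filter] at hz
          rw [Set.mem_toFinset] at hz'
          exact hAS z hz.2 hz'
        rw [SimpleGraph.degree, hN, Finset.card_union_of_disjoint hdisj,
          Finset.sum_union hdisj,
          Finset.sum_congr rfl (fun z hz => hyA z (Finset.mem_filter.mp hz).2),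
          Finset.sum_congr rfl (fun z hz => hyS z (Set.mem_toFinset.mp hz)),
          hyA x hxA]
        simp only [Finset.sum_const, Finset.sum_const_zero, nsmul_eq_mul, ← hk]
        push_cast
        ring
      · have hxB : x ∈ B := ⟨hxS, hxA⟩
        have hN : G.neighborFinset x
            = (G.neighborFinset x).filter (· ∈ B) ∪ S₀.toFinset := by
          ext z
          simp only [Finset.mem_union, Finset.mem_filter, mem_neighborFinset,
            Set.mem_toFinset]
          constructor
          · intro h
            by_cases hz : z ∈ S₀
            · exact Or.inr hz
            · refine Or.inl ⟨h, hz, fun hzA => hxA (hstep z x hzA h.symm hxS)⟩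
          · rintro (⟨h, _⟩ | h)
            · exact h
            · exact (hSsub z h)
        have hdisj : Disjoint ((G.neighborFinset x).filter (· ∈ B)) S₀.toFinset := by
          rw [Finset.disjoint_left]
          intro z hz hz'
          rw [Finset.mem_filter] at hz
          rw [Set.mem_toFinset] at hz'
          exact hz.2.1 hz'
        rw [SimpleGraph.degree, hN, Finset.card_union_of_disjoint hdisj,
          Finset.sum_union hdisj,
          Finset.sum_congr rfl (fun z hz => hyB z (Finset.mem_filter.mp hz).2),
          Finset.sum_congr rfl (fun z hz => hyS z (Set.mem_toFinset.mp hz)),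
          hyB x hxB]
        simp only [Finset.sum_const, Finset.sum_const_zero, nsmul_eq_mul, ← hk]
        push_cast
        ring

/-- If in a (connected) chordal graph the minimal vertex separators form a
chain under inclusion and the smallest one consists of universal vertices,
then `a(G) = κ(G)`. (This holds in particular for connected threshold graphs.) -/
theorem stmt_7 {V : Type*} [Fintype V] [DecidableEq V] (G : SimpleGraph V)
    (hconn : G.Connected) (hch : IsChordal G)
    (hchain : ∀ S T : Set V, IsMinimalVertexSeparator G S →
      IsMinimalVertexSeparator G T → S ⊆ T ∨ T ⊆ S)
    (hsmall : ∃ S₀ : Set V, IsMinimalVertexSeparator G S₀ ∧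
      (∀ S : Set V, IsMinimalVertexSeparator G S → S₀ ⊆ S) ∧
      ∀ v ∈ S₀, ∀ w, w ≠ v → G.Adj v w) :
    algConn G = (vertexConnectivity G : ℝ) := by
  classical
  obtain ⟨S₀, hminsep, _hS₀min, huniv⟩ := hsmall
  obtain ⟨u, v, huv, hnadj, ⟨huS, hvS, hsep⟩, _hminimal⟩ := hminsep
  set k := S₀.toFinset.card with hk
  have hk0 : 0 < k := by
    obtain ⟨p⟩ := hconn.preconnected u v
    obtain ⟨w, _, hwS⟩ := hsep p
    exact Finset.card_pos.mpr ⟨w, Set.mem_toFinset.mpr hwS⟩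
  -- S₀ disconnects the graph
  have hdisc : ¬ (G.induce ((↑(S₀.toFinset) : Set V)ᶜ)).Preconnected := by
    intro hpre
    have hu : u ∈ ((↑(S₀.toFinset) : Set V)ᶜ) := by simpa using huS
    have hv' : v ∈ ((↑(S₀.toFinset) : Set V)ᶜ) := by simpa using hvS
    obtain ⟨q⟩ := hpre ⟨u, hu⟩ ⟨v, hv'⟩
    obtain ⟨w, hw, hwS⟩ :=
      hsep (q.map (SimpleGraph.Embedding.induce ((↑(S₀.toFinset) : Set V)ᶜ)).toHom)
    replace hw : w ∈ List.map (SimpleGraph.Embedding.induce (G := G) ((↑(S₀.toFinset) : Set V)ᶜ)).toHom q.support := by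
      rw [← Walk.support_map]; exact hw
    rw [List.mem_map] at hw
    obtain ⟨z, _hz, rfl⟩ := hw
    exact z.2 (by simpa using hwS)
  have hmemvc : k ∈ {k' | ∃ S : Finset V, S.card = k' ∧
      ¬ (G.induce ((↑S : Set V)ᶜ)).Preconnected} := ⟨S₀.toFinset, rfl, hdisc⟩
  -- every disconnecting set contains S₀
  have hlb : ∀ m ∈ {k' | ∃ S : Finset V, S.card = k' ∧
      ¬ (G.induce ((↑S : Set V)ᶜ)).Preconnected}, k ≤ m := by
    rintro m ⟨S, rfl, hS⟩
    have hsub : S₀.toFinset ⊆ S := by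
      intro s hs
      rw [Set.mem_toFinset] at hs
      by_contra hsS
      apply hS
      intro x z
      have hsmem : s ∈ ((↑S : Set V)ᶜ) := by simpa using hsS
      have hxs : ∀ x : ((↑S : Set V)ᶜ : Set V),
          (G.induce ((↑S : Set V)ᶜ)).Reachable x ⟨s, hsmem⟩ := by
        intro x
        by_cases hxeq : (x : V) = s
        · have hx2 : x = ⟨s, hsmem⟩ := Subtype.ext hxeq
          rw [hx2]
        · exact SimpleGraph.Adj.reachable ((huniv s hs (↑x) hxeq).symm :
            G.Adj (↑x) (↑(⟨s, hsmem⟩ : ((↑S : Set V)ᶜ : Set V))))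
      exact (hxs x).trans (hxs z).symm
    exact Finset.card_le_card hsub
  have hvc : vertexConnectivity G = k := by
    unfold vertexConnectivity
    exact le_antisymm (Nat.sInf_le hmemvc) (hlb _ (Nat.sInf_mem ⟨k, hmemvc⟩))
  obtain ⟨y, hy0, heig⟩ := aux_eigen G S₀ u v huS hvS hsep huniv
  have hkR : ((k : ℕ) : ℝ) ≠ 0 := Nat.cast_ne_zero.mpr hk0.ne'
  have hmem : (k:ℝ) ∈ {μ : ℝ | μ ≠ 0 ∧ ∃ y : V → ℝ, y ≠ 0 ∧ G.lapMatrix ℝ *ᵥ y = μ • y} :=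
    ⟨hkR, y, hy0, heig⟩
  have hbdd : ∀ μ ∈ {μ : ℝ | μ ≠ 0 ∧ ∃ y : V → ℝ, y ≠ 0 ∧
      G.lapMatrix ℝ *ᵥ y = μ • y}, (k:ℝ) ≤ μ := by
    rintro μ ⟨hμ, y', hy', heig'⟩
    exact aux_lower G S₀ huniv μ y' hy' hμ heig'
  have halg : algConn G = (k:ℝ) := by
    unfold algConn
    exact le_antisymm (csInf_le ⟨(k:ℝ), hbdd⟩ hmem) (le_csInf ⟨_, hmem⟩ hbdd)
  rw [halg, hvc]
end

section
/- Every maximal clique of a quasi-threshold graph contains at least one simplicial vertex. -/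
open SimpleGraph

/-- A quasi-threshold (trivially perfect) graph: no induced `P₄` and no induced `C₄`. -/
def IsQuasiThreshold {V : Type*} (G : SimpleGraph V) : Prop :=
  IsEmpty (pathGraph 4 ↪g G) ∧ IsEmpty (cycleGraph 4 ↪g G)

lemma comp_aux {V : Type*} {G : SimpleGraph V} (hqt : IsQuasiThreshold G)
    {x y a b : V} (hxy : G.Adj x y) (hxa : G.Adj x a) (hya : ¬ G.Adj y a) (hay : a ≠ y)
    (hyb : G.Adj y b) (hxb : ¬ G.Adj x b) (hbx : b ≠ x) : False := by
  have hab : a ≠ b := by rintro rfl; exact hya hyb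
  have hax : a ≠ x := fun h => G.loopless.irrefl x (h ▸ hxa)
  have hby : b ≠ y := fun h => G.loopless.irrefl y (h ▸ hyb)
  have hxyne : x ≠ y := hxy.ne
  have hinj : Function.Injective ![a, x, y, b] := by
    intro i j hij
    fin_cases i <;> fin_cases j <;> simp_all
  by_cases h : G.Adj a b
  · -- C4 : a x y b
    refine hqt.2.false ⟨⟨![a,x,y,b], hinj⟩, ?_⟩
    intro i j
    fin_cases i <;> fin_cases j <;>
      simp only [Function.Embedding.coeFn_mk, Matrix.cons_val_zero, Matrix.cons_val_one,
        Matrix.head_cons, Matrix.cons_val_two, Matrix.tail_cons, Matrix.cons_val_three, Fin.reduceFinMk] <;>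
      refine ⟨fun hh => ?_, fun hh => ?_⟩ <;>
      first
      | exact cycleGraph_adj'.mpr (by decide)
      | exact absurd (cycleGraph_adj'.mp hh) (by decide)
      | assumption
      | exact hxa.symm | exact hxy.symm | exact hyb.symm | exact h.symm
      | exact absurd hh hya | exact absurd hh hxb
      | exact absurd (G.symm.symm _ _ hh) hya | exact absurd (G.symm.symm _ _ hh) hxb
      | exact (G.loopless.irrefl _ hh).elim
  · -- P4 : a x y b
    refine hqt.1.false ⟨⟨![a,x,y,b], hinj⟩, ?_⟩
    intro i j
    fin_cases i <;> fin_cases j <;>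
      simp only [Function.Embedding.coeFn_mk, Matrix.cons_val_zero, Matrix.cons_val_one,
        Matrix.head_cons, Matrix.cons_val_two, Matrix.tail_cons, Matrix.cons_val_three, Fin.reduceFinMk] <;>
      refine ⟨fun hh => ?_, fun hh => ?_⟩ <;>
      first
      | exact pathGraph_adj.mpr (by decide)
      | exact absurd (pathGraph_adj.mp hh) (by decide)
      | assumption
      | exact hxa.symm | exact hxy.symm | exact hyb.symm
      | exact absurd hh hya | exact absurd hh hxb | exact absurd hh h
      | exact absurd (G.symm.symm _ _ hh) hya | exact absurd (G.symm.symm _ _ hh) hxb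
      | exact absurd (G.symm.symm _ _ hh) h
      | exact (G.loopless.irrefl _ hh).elim

/-- Every maximal clique of a quasi-threshold graph contains at least one
simplicial vertex. -/
theorem stmt_8 {V : Type*} [Fintype V] [Nonempty V] [DecidableEq V]
    (G : SimpleGraph V) (hqt : IsQuasiThreshold G)
    (Q : Finset V) (hQ : G.IsClique (Q : Set V))
    (hmax : ∀ R : Finset V, G.IsClique (R : Set V) → Q ⊆ R → R = Q) :
    ∃ v ∈ Q, G.IsClique (G.neighborSet v) := by
  classical
  set N := fun v => insert v (G.neighborFinset v) with hN
  have hQne : Q.Nonempty := by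
    by_contra h
    rw [Finset.not_nonempty_iff_eq_empty] at h
    obtain ⟨v⟩ := ‹Nonempty V›
    have := hmax {v} (by simp [SimpleGraph.isClique_singleton]) (by simp [h])
    simp [h] at this
  -- comparability of closed neighborhoods along edges
  have hcomp : ∀ {u w : V}, G.Adj u w → N u ⊆ N w ∨ N w ⊆ N u := by
    intro u w huw
    by_contra hc
    push_neg at hc
    obtain ⟨h1, h2⟩ := hc
    obtain ⟨a, ha1, ha2⟩ := Finset.not_subset.mp h1
    obtain ⟨b, hb1, hb2⟩ := Finset.not_subset.mp h2
    simp only [hN, Finset.mem_insert, mem_neighborFinset, not_or] at ha1 ha2 hb1 hb2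
    rcases ha1 with rfl | hua
    · exact ha2.2 huw.symm
    rcases hb1 with rfl | hwb
    · exact hb2.2 huw
    exact comp_aux hqt huw hua ha2.2 ha2.1 hwb hb2.2 hb2.1
  obtain ⟨v, hvQ, hmin⟩ := Q.exists_min_image (fun v => (N v).card) hQne
  have hsub : ∀ u ∈ Q, N v ⊆ N u := by
    intro u hu
    by_cases huv : u = v
    · subst huv; exact Finset.Subset.refl _
    · have hadj : G.Adj v u := hQ hvQ hu (Ne.symm huv)
      rcases hcomp hadj with h | h
      · exact h
      · have := hmin u hu
        rw [Finset.eq_of_subset_of_card_le h this]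
  refine ⟨v, hvQ, ?_⟩
  intro a ha b hb hab
  simp only [mem_neighborSet] at ha hb
  by_contra hnadj
  have key : ∀ c, G.Adj v c → c ∈ Q := by
    intro c hc
    have hclique : G.IsClique ((insert c Q : Finset V) : Set V) := by
      rw [Finset.coe_insert]
      apply hQ.insert
      intro u hu hne
      have hcNu : c ∈ N u := hsub u hu (by simp [hN, hc])
      simp only [hN, Finset.mem_insert, mem_neighborFinset] at hcNu
      rcases hcNu with rfl | h
      · exact absurd rfl hne
      · exact h.symm
    have := hmax _ hclique (Finset.subset_insert _ _)
    rw [← this]; exact Finset.mem_insert_self _ _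
  exact hnadj (hQ (key a ha) (key b hb) hab)
end

section
/- In a quasi-threshold graph G, for every maximal clique Q the minimal vertex separators of G contained in Q form a chain under inclusion (i.e., any two minimal vertex separators of G that are subsets of Q are comparable by inclusion). -/
open SimpleGraph

section Aux
variable {V : Type*} {G : SimpleGraph V}

lemma path4_emb {a b c d : V}
    (h01 : G.Adj a b) (h12 : G.Adj b c) (h23 : G.Adj c d)
    (n02 : ¬ G.Adj a c) (n03 : ¬ G.Adj a d) (n13 : ¬ G.Adj b d)
    (e02 : a ≠ c) (e03 : a ≠ d) (e13 : b ≠ d) :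
    Nonempty (pathGraph 4 ↪g G) := by
  have h10 := h01.symm; have h21 := h12.symm; have h32 := h23.symm
  have n20 : ¬ G.Adj c a := fun h => n02 h.symm
  have n30 : ¬ G.Adj d a := fun h => n03 h.symm
  have n31 : ¬ G.Adj d b := fun h => n13 h.symm
  have e01 := h01.ne; have e12 := h12.ne; have e23 := h23.ne
  have e10 := e01.symm; have e21 := e12.symm; have e32 := e23.symm
  have e20 := e02.symm; have e30 := e03.symm; have e31 := e13.symm
  refine ⟨⟨⟨![a,b,c,d], ?_⟩, ?_⟩⟩
  · intro i j
    fin_cases i <;> fin_cases j <;> simp_all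
  · intro i j
    fin_cases i <;> fin_cases j <;>
      simp only [Function.Embedding.coeFn_mk, Matrix.cons_val_zero, Matrix.cons_val_one,
        Matrix.head_cons, Matrix.cons_val_two, Matrix.tail_cons, Matrix.cons_val_three] <;>
      first
        | exact iff_of_false G.irrefl (by simp only [pathGraph_adj]; decide)
        | exact iff_of_true (by assumption) (by simp only [pathGraph_adj]; decide)
        | exact iff_of_false (by assumption) (by simp only [pathGraph_adj]; decide)

lemma cycle4_emb {a b c d : V}
    (h01 : G.Adj a b) (h12 : G.Adj b c) (h23 : G.Adj c d) (h30 : G.Adj d a)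
    (n02 : ¬ G.Adj a c) (n13 : ¬ G.Adj b d)
    (e02 : a ≠ c) (e13 : b ≠ d) :
    Nonempty (cycleGraph 4 ↪g G) := by
  have h10 := h01.symm; have h21 := h12.symm; have h32 := h23.symm; have h03 := h30.symm
  have n20 : ¬ G.Adj c a := fun h => n02 h.symm
  have n31 : ¬ G.Adj d b := fun h => n13 h.symm
  have e01 := h01.ne; have e12 := h12.ne; have e23 := h23.ne; have e30 := h30.ne
  have e10 := e01.symm; have e21 := e12.symm; have e32 := e23.symm; have e03 := e30.symm
  have e20 := e02.symm; have e31 := e13.symm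
  refine ⟨⟨⟨![a,b,c,d], ?_⟩, ?_⟩⟩
  · intro i j
    fin_cases i <;> fin_cases j <;> simp_all
  · intro i j
    fin_cases i <;> fin_cases j <;>
      simp only [Function.Embedding.coeFn_mk, Matrix.cons_val_zero, Matrix.cons_val_one,
        Matrix.head_cons, Matrix.cons_val_two, Matrix.tail_cons, Matrix.cons_val_three] <;>
      first
        | exact iff_of_false G.irrefl (by decide)
        | exact iff_of_true (by assumption) (by decide)
        | exact iff_of_false (by assumption) (by decide)

/-- In a {P4,C4}-free graph, closed neighborhoods along an edge are comparable. -/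
lemma qt_nbhd_chain (hqt : IsQuasiThreshold G) {s t : V} (hst : G.Adj s t) :
    (∀ x, G.Adj s x → x = t ∨ G.Adj t x) ∨ (∀ x, G.Adj t x → x = s ∨ G.Adj s x) := by
  by_contra h
  push_neg at h
  obtain ⟨⟨x, hsx, hxt, hxt'⟩, ⟨y, hty, hys, hys'⟩⟩ := h
  have hxy : x ≠ y := by rintro rfl; exact hys' hsx
  by_cases hadj : G.Adj x y
  · -- C4 on x s t y
    exact (cycle4_emb hsx.symm hst hty hadj.symm
      (fun h => hxt' h.symm) hys' hxt (Ne.symm hys)).elim hqt.2.false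
  · -- P4 : x s t y
    exact (path4_emb hsx.symm hst hty
      (fun h => hxt' h.symm) hadj hys'
      hxt hxy (Ne.symm hys)).elim hqt.1.false

/-- In a P4-free graph, every walk between nonadjacent distinct vertices contains a
common neighbor of the endpoints. -/
lemma qt_common_nbr (hqt : IsQuasiThreshold G) :
    ∀ {v u : V} (p : G.Walk u v), ¬ G.Adj u v → u ≠ v →
      ∃ x ∈ p.support, G.Adj u x ∧ G.Adj v x := by
  intro v u p
  induction p with
  | nil => exact fun _ h => absurd rfl h
  | @cons u b v h q ih =>
    intro huv hne
    by_cases hbv : b = v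
    · subst hbv; exact absurd h huv
    by_cases habv : G.Adj b v
    · exact ⟨b, by simp, h, habv.symm⟩
    obtain ⟨y, hy, hby, hvy⟩ := ih habv hbv
    by_cases huy : G.Adj u y
    · exact ⟨y, by simp [hy], huy, hvy⟩
    exfalso
    -- induced P4 : u b y v
    have huy' : u ≠ y := by rintro rfl; exact huv hvy.symm
    exact (path4_emb h hby hvy.symm huy huv habv huy' hne hbv).elim hqt.1.false

/-- A minimal vertex separator in a quasi-threshold graph is exactly the common
neighborhood of some nonadjacent pair. -/
lemma minsep_eq_common (hqt : IsQuasiThreshold G) {S : Set V}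
    (hS : IsMinimalVertexSeparator G S) :
    ∃ u v, u ≠ v ∧ ¬ G.Adj u v ∧ S = {x | G.Adj u x ∧ G.Adj v x} := by
  obtain ⟨u, v, hne, hnadj, hsep, hmin⟩ := hS
  refine ⟨u, v, hne, hnadj, ?_⟩
  set N : Set V := {x | G.Adj u x ∧ G.Adj v x} with hN
  have hNsub : N ⊆ S := by
    intro x ⟨hux, hvx⟩
    obtain ⟨w, hw, hwS⟩ := hsep.2.2 (Walk.cons hux (Walk.cons hvx.symm Walk.nil))
    simp [Walk.support_cons] at hw
    rcases hw with rfl | rfl | rfl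
    · exact absurd hwS hsep.1
    · exact hwS
    · exact absurd hwS hsep.2.1
  have hNsep : SeparatesPair G N u v := by
    refine ⟨fun hh => G.irrefl hh.1, fun hh => G.irrefl hh.2, fun p => ?_⟩
    obtain ⟨x, hx, hux, hvx⟩ := qt_common_nbr hqt p hnadj hne
    exact ⟨x, hx, hux, hvx⟩
  by_contra hSN
  exact hmin N (hNsub.ssubset_of_ne fun h => hSN h.symm) hNsep

/-- Core contradiction: if `S` is the common neighborhood of the nonadjacent pair `a b`,
`s ∈ S`, `t ∉ S`, and `N[s] ⊆ N[t]`, contradiction. -/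
lemma core_contra {a b s t : V} (hab : a ≠ b) (hnadj : ¬ G.Adj a b)
    (hs : G.Adj a s ∧ G.Adj b s) (ht : ¬ (G.Adj a t ∧ G.Adj b t))
    (hchain : ∀ x, G.Adj s x → x = t ∨ G.Adj t x) : False := by
  rcases hchain a hs.1.symm with h1 | h1
  · rcases hchain b hs.2.symm with h2 | h2
    · exact hab (h1.trans h2.symm)
    · subst h1; exact hnadj h2
  · rcases hchain b hs.2.symm with h2 | h2
    · subst h2; exact hnadj h1.symm
    · exact ht ⟨h1.symm, h2.symm⟩

end Aux

/-- In a quasi-threshold graph, the minimal vertex separators contained in a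
fixed maximal clique form a chain under inclusion. -/
theorem stmt_9 {V : Type*} [Fintype V] [DecidableEq V]
    (G : SimpleGraph V) (hqt : IsQuasiThreshold G)
    (Q : Set V) (hQ : G.IsClique Q)
    (hmax : ∀ R : Set V, G.IsClique R → Q ⊆ R → R = Q)
    (S T : Set V) (hS : IsMinimalVertexSeparator G S) (hT : IsMinimalVertexSeparator G T)
    (hSQ : S ⊆ Q) (hTQ : T ⊆ Q) :
    S ⊆ T ∨ T ⊆ S := by
  obtain ⟨a, b, hab, hnab, hSeq⟩ := minsep_eq_common hqt hS
  obtain ⟨c, d, hcd, hncd, hTeq⟩ := minsep_eq_common hqt hT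
  by_contra hcontra
  push_neg at hcontra
  obtain ⟨hST, hTS⟩ := hcontra
  obtain ⟨s, hsS, hsT⟩ := Set.not_subset.1 hST
  obtain ⟨t, htT, htS⟩ := Set.not_subset.1 hTS
  have hst : s ≠ t := by rintro rfl; exact hsT htT
  have hadj : G.Adj s t := hQ (hSQ hsS) (hTQ htT) hst
  rw [hSeq] at hsS htS
  rw [hTeq] at htT hsT
  rcases qt_nbhd_chain hqt hadj with hc | hc
  · exact core_contra hab hnab hsS htS hc
  · exact core_contra hcd hncd htT hsT hc
end

section
/- A graph G is a quasi-threshold graph (P₄-free and C₄-free) if and only if for every edge uv of G, either N[u] ⊆ N[v] or N[v] ⊆ N[u]. -/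
open SimpleGraph

def mkPathEmb {V : Type*} {G : SimpleGraph V} {a b c d : V}
    (hab : G.Adj a b) (hbc : G.Adj b c) (hcd : G.Adj c d)
    (hac : ¬ G.Adj a c) (had : ¬ G.Adj a d) (hbd : ¬ G.Adj b d)
    (nac : a ≠ c) (nad : a ≠ d) (nbd : b ≠ d) : pathGraph 4 ↪g G where
  toFun := ![a, b, c, d]
  inj' := by
    have nab := hab.ne; have nbc := hbc.ne; have ncd := hcd.ne
    intro i j h
    fin_cases i <;> fin_cases j <;> simp_all <;> simp_all [eq_comm]
  map_rel_iff' := by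
    have nab := hab.ne; have nbc := hbc.ne; have ncd := hcd.ne
    have hba := hab.symm; have hcb := hbc.symm; have hdc := hcd.symm
    have hca : ¬ G.Adj c a := fun h => hac h.symm
    have hda : ¬ G.Adj d a := fun h => had h.symm
    have hdb : ¬ G.Adj d b := fun h => hbd h.symm
    intro i j
    show G.Adj (![a, b, c, d] i) (![a, b, c, d] j) ↔ _
    fin_cases i <;> fin_cases j <;>
      simp_all [pathGraph_adj, G.irrefl] <;> decide

def mkCycleEmb {V : Type*} {G : SimpleGraph V} {a b c d : V}
    (hab : G.Adj a b) (hbc : G.Adj b c) (hcd : G.Adj c d) (hda : G.Adj d a)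
    (hac : ¬ G.Adj a c) (hbd : ¬ G.Adj b d)
    (nac : a ≠ c) (nbd : b ≠ d) : cycleGraph 4 ↪g G where
  toFun := ![a, b, c, d]
  inj' := by
    have nab := hab.ne; have nbc := hbc.ne; have ncd := hcd.ne; have nda := hda.ne
    intro i j h
    fin_cases i <;> fin_cases j <;> simp_all <;> simp_all [eq_comm]
  map_rel_iff' := by
    have nab := hab.ne; have nbc := hbc.ne; have ncd := hcd.ne; have nda := hda.ne
    have hba := hab.symm; have hcb := hbc.symm; have hdc := hcd.symm; have had := hda.symm
    have hca : ¬ G.Adj c a := fun h => hac h.symm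
    have hdb : ¬ G.Adj d b := fun h => hbd h.symm
    intro i j
    show G.Adj (![a, b, c, d] i) (![a, b, c, d] j) ↔ _
    fin_cases i <;> fin_cases j <;>
      simp_all [cycleGraph_adj', G.irrefl] <;> decide

/-- `G` is quasi-threshold iff for every edge `uv`, the closed neighborhoods
satisfy `N[u] ⊆ N[v]` or `N[v] ⊆ N[u]`. -/
theorem stmt_10 {V : Type*} (G : SimpleGraph V) :
    IsQuasiThreshold G ↔
      ∀ u v : V, G.Adj u v →
        (G.neighborSet u ∪ {u} ⊆ G.neighborSet v ∪ {v} ∨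
          G.neighborSet v ∪ {v} ⊆ G.neighborSet u ∪ {u}) := by
  constructor
  · rintro ⟨hP, hC⟩ u v huv
    by_contra hcon
    push_neg at hcon
    obtain ⟨h1, h2⟩ := hcon
    obtain ⟨x, hx1, hx2⟩ := Set.not_subset.mp h1
    obtain ⟨y, hy1, hy2⟩ := Set.not_subset.mp h2
    simp only [Set.mem_union, mem_neighborSet, Set.mem_singleton_iff, not_or] at hx1 hx2 hy1 hy2
    have hux : G.Adj u x := by
      rcases hx1 with h | rfl
      · exact h
      · exact absurd (Or.inl huv.symm) (by simpa using hx2)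
    have hvy : G.Adj v y := by
      rcases hy1 with h | rfl
      · exact h
      · exact absurd (Or.inl huv) (by simpa using hy2)
    have hvx : ¬ G.Adj v x := hx2.1
    have hxv : x ≠ v := hx2.2
    have huy : ¬ G.Adj u y := hy2.1
    have hyu : y ≠ u := hy2.2
    have hxy : x ≠ y := fun h => hvx (h ▸ hvy)
    by_cases hadj : G.Adj x y
    · exact (hC.false (mkCycleEmb hux.symm huv hvy hadj.symm
        (fun h => hvx h.symm) huy hxv (fun h => hyu h.symm)))
    · exact (hP.false (mkPathEmb hux.symm huv hvy
        (fun h => hvx h.symm) hadj huy hxv hxy (fun h => hyu h.symm)))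
  · intro h
    constructor
    · constructor
      intro e
      have hab : G.Adj (e 0) (e 1) := e.map_rel_iff.mpr (by first | (rw [pathGraph_adj]; decide) | (rw [cycleGraph_adj']; decide))
      have hbc : G.Adj (e 1) (e 2) := e.map_rel_iff.mpr (by first | (rw [pathGraph_adj]; decide) | (rw [cycleGraph_adj']; decide))
      have hcd : G.Adj (e 2) (e 3) := e.map_rel_iff.mpr (by first | (rw [pathGraph_adj]; decide) | (rw [cycleGraph_adj']; decide))
      have hac : ¬ G.Adj (e 0) (e 2) := fun hh => by have := e.map_rel_iff.mp hh; revert this; first | (rw [pathGraph_adj]; decide) | (rw [cycleGraph_adj']; decide)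
      have hbd : ¬ G.Adj (e 1) (e 3) := fun hh => by have := e.map_rel_iff.mp hh; revert this; first | (rw [pathGraph_adj]; decide) | (rw [cycleGraph_adj']; decide)
      have nac : e 0 ≠ e 2 := e.injective.ne (by decide)
      have nbd : e 1 ≠ e 3 := e.injective.ne (by decide)
      rcases h (e 1) (e 2) hbc with hs | hs
      · have := hs (Or.inl hab.symm)
        simp only [Set.mem_union, mem_neighborSet, Set.mem_singleton_iff] at this
        rcases this with hh | hh
        · exact hac hh.symm
        · exact nac hh
      · have := hs (Or.inl hcd)
        simp only [Set.mem_union, mem_neighborSet, Set.mem_singleton_iff] at this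
        rcases this with hh | hh
        · exact hbd hh
        · exact nbd hh.symm
    · constructor
      intro e
      have hab : G.Adj (e 0) (e 1) := e.map_rel_iff.mpr (by first | (rw [pathGraph_adj]; decide) | (rw [cycleGraph_adj']; decide))
      have hbc : G.Adj (e 1) (e 2) := e.map_rel_iff.mpr (by first | (rw [pathGraph_adj]; decide) | (rw [cycleGraph_adj']; decide))
      have hda : G.Adj (e 3) (e 0) := e.map_rel_iff.mpr (by first | (rw [pathGraph_adj]; decide) | (rw [cycleGraph_adj']; decide))
      have hac : ¬ G.Adj (e 0) (e 2) := fun hh => by have := e.map_rel_iff.mp hh; revert this; first | (rw [pathGraph_adj]; decide) | (rw [cycleGraph_adj']; decide)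
      have hbd : ¬ G.Adj (e 1) (e 3) := fun hh => by have := e.map_rel_iff.mp hh; revert this; first | (rw [pathGraph_adj]; decide) | (rw [cycleGraph_adj']; decide)
      have nac : e 0 ≠ e 2 := e.injective.ne (by decide)
      have nbd : e 1 ≠ e 3 := e.injective.ne (by decide)
      rcases h (e 0) (e 1) hab with hs | hs
      · have := hs (Or.inl hda.symm)
        simp only [Set.mem_union, mem_neighborSet, Set.mem_singleton_iff] at this
        rcases this with hh | hh
        · exact hbd hh
        · exact nbd hh.symm
      · have := hs (Or.inl hbc)
        simp only [Set.mem_union, mem_neighborSet, Set.mem_singleton_iff] at this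
        rcases this with hh | hh
        · exact hac hh
        · exact nac hh.symm
end

section
/- Let G be a (k,t)-split graph with r ≥ 1 parts, i.e., G consists of a clique C on rk vertices partitioned into r disjoint sets S₁,...,S_r of size k, together with r independent sets A₁,...,A_t each of size t, where every vertex of A_i is adjacent to exactly the vertices of S_i (and the A_i's are pairwise non-adjacent and independent). Then the Laplacian matrix of G has eigenvalue 0 with multiplicity 1, eigenvalue k with multiplicity at least r(t-1), eigenvalue rk + t with multiplicity at least r(k-1), and eigenvalue k + t with multiplicity at least 1; in particular G has at least n - 2r + 2 integer Laplacian eigenvalues, where n = (k + t)r. -/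
open SimpleGraph Matrix Polynomial

open scoped Classical

/-- The `(k,t)`-split graph with `r` parts: a clique on the `r·k` vertices
`Fin r × Fin k` (partitioned into the minimal vertex separators `Sᵢ = {i} × Fin k`),
together with `r` independent sets `Aᵢ = {i} × Fin t`, each vertex of `Aᵢ` being adjacent
exactly to the vertices of `Sᵢ`. -/
def ktSplit (r k t : ℕ) : SimpleGraph ((Fin r × Fin k) ⊕ (Fin r × Fin t)) where
  Adj x y := match x, y with
    | Sum.inl a, Sum.inl b => a ≠ b
    | Sum.inl a, Sum.inr b => a.1 = b.1
    | Sum.inr a, Sum.inl b => a.1 = b.1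
    | Sum.inr _, Sum.inr _ => False
  symm := ⟨by rintro (a | a) (b | b) h <;> first | exact h | exact h.symm⟩
  loopless := ⟨by rintro (a | a) h <;> [exact h rfl; exact h]⟩


variable {r k t : ℕ}

private lemma sum_ite_ne' {α : Type*} [Fintype α] [DecidableEq α] (c : α) (f : α → ℝ) :
    ∑ q, (if c ≠ q then f q else 0) = (∑ q, f q) - f c := by
  have : ∀ q : α, (if c ≠ q then f q else 0) = f q - (if c = q then f q else 0) := by
    intro q; by_cases h : c = q <;> simp [h]
  rw [Finset.sum_congr rfl fun q _ => this q, Finset.sum_sub_distrib, Finset.sum_ite_eq]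
  simp

lemma ktSplit_lap_apply (x : ((Fin r × Fin k) ⊕ (Fin r × Fin t)) → ℝ)
    (v : (Fin r × Fin k) ⊕ (Fin r × Fin t)) :
    ((ktSplit r k t).lapMatrix ℝ *ᵥ x) v =
      (∑ u, if (ktSplit r k t).Adj v u then (1:ℝ) else 0) * x v
        - ∑ u, if (ktSplit r k t).Adj v u then x u else 0 := by
  rw [SimpleGraph.lapMatrix_mulVec_apply, SimpleGraph.neighborFinset_eq_filter,
    Finset.sum_filter, SimpleGraph.degree_eq_sum_if_adj]

private lemma sum_if_fst_eq {α : Type*} [Fintype α] (i : Fin r) (g : Fin r × α → ℝ) :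
    (∑ p : Fin r × α, if i = p.1 then g p else 0) = ∑ a : α, g (i, a) := by
  rw [Fintype.sum_prod_type]
  have h : ∀ j, (∑ c : α, if i = j then g (j, c) else 0)
      = if i = j then ∑ c, g (j, c) else 0 := fun j => by split <;> simp
  rw [Finset.sum_congr rfl fun j _ => h j, Finset.sum_ite_eq]
  simp

lemma ktSplit_lap_inr (x : ((Fin r × Fin k) ⊕ (Fin r × Fin t)) → ℝ) (i : Fin r) (b : Fin t) :
    ((ktSplit r k t).lapMatrix ℝ *ᵥ x) (Sum.inr (i, b)) =
      (k : ℝ) * x (Sum.inr (i, b)) - ∑ a : Fin k, x (Sum.inl (i, a)) := by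
  rw [ktSplit_lap_apply]
  have h1 : ∀ f : ((Fin r × Fin k) ⊕ (Fin r × Fin t)) → ℝ,
      (∑ u, if (ktSplit r k t).Adj (Sum.inr (i, b)) u then f u else 0)
        = ∑ a : Fin k, f (Sum.inl (i, a)) := by
    intro f
    have e1 : ∀ p : Fin r × Fin k,
        (if (ktSplit r k t).Adj (Sum.inr (i, b)) (Sum.inl p) then f (Sum.inl p) else 0)
          = (if i = p.1 then f (Sum.inl p) else 0) := by
      intro p; by_cases h : i = p.1 <;> simp [ktSplit, h]
    have e2 : ∀ p : Fin r × Fin t,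
        (if (ktSplit r k t).Adj (Sum.inr (i, b)) (Sum.inr p) then f (Sum.inr p) else 0)
          = 0 := by
      intro p; simp [ktSplit]
    rw [Fintype.sum_sum_type, Finset.sum_congr rfl fun p _ => e1 p,
      Finset.sum_congr rfl fun p _ => e2 p, sum_if_fst_eq i (fun p => f (Sum.inl p))]
    simp
  rw [h1, h1]
  simp [mul_comm]

lemma ktSplit_lap_inl (x : ((Fin r × Fin k) ⊕ (Fin r × Fin t)) → ℝ) (i : Fin r) (a : Fin k) :
    ((ktSplit r k t).lapMatrix ℝ *ᵥ x) (Sum.inl (i, a)) =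
      ((r : ℝ) * k + t) * x (Sum.inl (i, a)) - ∑ p : Fin r × Fin k, x (Sum.inl p)
        - ∑ b : Fin t, x (Sum.inr (i, b)) := by
  rw [ktSplit_lap_apply]
  have h1 : ∀ f : ((Fin r × Fin k) ⊕ (Fin r × Fin t)) → ℝ,
      (∑ u, if (ktSplit r k t).Adj (Sum.inl (i, a)) u then f u else 0)
        = ((∑ p : Fin r × Fin k, f (Sum.inl p)) - f (Sum.inl (i, a)))
          + ∑ b : Fin t, f (Sum.inr (i, b)) := by
    intro f
    have e1 : ∀ p : Fin r × Fin k,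
        (if (ktSplit r k t).Adj (Sum.inl (i, a)) (Sum.inl p) then f (Sum.inl p) else 0)
          = (if (i, a) ≠ p then f (Sum.inl p) else 0) := by
      intro p; by_cases h : (i, a) = p <;> simp [ktSplit, h]
    have e2 : ∀ p : Fin r × Fin t,
        (if (ktSplit r k t).Adj (Sum.inl (i, a)) (Sum.inr p) then f (Sum.inr p) else 0)
          = (if i = p.1 then f (Sum.inr p) else 0) := by
      intro p; by_cases h : i = p.1 <;> simp [ktSplit, h]
    rw [Fintype.sum_sum_type, Finset.sum_congr rfl fun p _ => e1 p,
      Finset.sum_congr rfl fun p _ => e2 p, sum_ite_ne' (i, a) (fun p => f (Sum.inl p)),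
      sum_if_fst_eq i (fun p => f (Sum.inr p))]
  rw [h1, h1]
  have hcard : (∑ _p : Fin r × Fin k, (1:ℝ)) = (r : ℝ) * k := by
    simp [Finset.card_univ]
  have htcard : (∑ _b : Fin t, (1:ℝ)) = (t : ℝ) := by simp
  rw [hcard, htcard]
  ring

/-- The embedding of independent-part vectors. -/
def PhiT (r k t : ℕ) : ((Fin r × Fin t) → ℝ) →ₗ[ℝ] (((Fin r × Fin k) ⊕ (Fin r × Fin t)) → ℝ) where
  toFun y := Sum.elim 0 y
  map_add' y z := by funext v; cases v <;> simp
  map_smul' c y := by funext v; cases v <;> simp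

/-- The embedding of clique-part vectors. -/
def PhiK (r k t : ℕ) : ((Fin r × Fin k) → ℝ) →ₗ[ℝ] (((Fin r × Fin k) ⊕ (Fin r × Fin t)) → ℝ) where
  toFun y := Sum.elim y 0
  map_add' y z := by funext v; cases v <;> simp
  map_smul' c y := by funext v; cases v <;> simp

/-- The per-part sum map. -/
def psiMap (r : ℕ) (α : Type*) [Fintype α] : ((Fin r × α) → ℝ) →ₗ[ℝ] (Fin r → ℝ) where
  toFun y := fun i => ∑ a : α, y (i, a)
  map_add' y z := by funext i; simp [Finset.sum_add_distrib]
  map_smul' c y := by funext i; simp [Finset.mul_sum]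

lemma psiMap_surjective (r : ℕ) (α : Type*) [Fintype α] [DecidableEq α] [Nonempty α] :
    Function.Surjective (psiMap r α) := by
  intro g
  classical
  obtain ⟨a0⟩ := ‹Nonempty α›
  refine ⟨fun p => if p.2 = a0 then g p.1 else 0, ?_⟩
  funext i
  simp [psiMap]

lemma finrank_ker_psiMap (r : ℕ) (α : Type*) [Fintype α] [DecidableEq α] [Nonempty α] :
    Module.finrank ℝ (LinearMap.ker (psiMap r α)) = r * Fintype.card α - r := by
  have h := LinearMap.finrank_range_add_finrank_ker (psiMap r α)
  rw [LinearMap.range_eq_top.mpr (psiMap_surjective r α)] at h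
  simp only [finrank_top, Module.finrank_fintype_fun_eq_card, Fintype.card_prod,
    Fintype.card_fin] at h
  omega

lemma PhiT_mem_eigenspace (y : (Fin r × Fin t) → ℝ) (hy : y ∈ LinearMap.ker (psiMap r (Fin t))) :
    PhiT r k t y ∈ Module.End.eigenspace (Matrix.toLin' ((ktSplit r k t).lapMatrix ℝ)) (k : ℝ) := by
  rw [Module.End.mem_eigenspace_iff]
  have hy' : ∀ i, ∑ b : Fin t, y (i, b) = 0 := fun i => congrFun (LinearMap.mem_ker.mp hy) i
  rw [Matrix.toLin'_apply]
  funext v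
  rcases v with p | p <;> rcases p with ⟨i, c⟩
  · rw [ktSplit_lap_inl]
    simp [PhiT, hy' i]
  · rw [ktSplit_lap_inr]
    simp [PhiT, mul_comm]

lemma PhiK_mem_eigenspace (y : (Fin r × Fin k) → ℝ) (hy : y ∈ LinearMap.ker (psiMap r (Fin k))) :
    PhiK r k t y ∈ Module.End.eigenspace (Matrix.toLin' ((ktSplit r k t).lapMatrix ℝ))
      ((r : ℝ) * k + t) := by
  rw [Module.End.mem_eigenspace_iff]
  have hy' : ∀ i, ∑ a : Fin k, y (i, a) = 0 := fun i => congrFun (LinearMap.mem_ker.mp hy) i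
  have htot : ∑ p : Fin r × Fin k, y p = 0 := by
    rw [Fintype.sum_prod_type]
    simp [hy']
  rw [Matrix.toLin'_apply]
  funext v
  rcases v with p | p <;> rcases p with ⟨i, c⟩
  · rw [ktSplit_lap_inl]
    simp [PhiK, htot, mul_comm]
  · rw [ktSplit_lap_inr]
    simp [PhiK, hy' i]

/-- The special eigenvector of eigenvalue `k + t`. -/
def xSpecial (r k t : ℕ) : ((Fin r × Fin k) ⊕ (Fin r × Fin t)) → ℝ :=
  Sum.elim (fun _ => (t : ℝ)) (fun _ => -(k : ℝ))

lemma xSpecial_mem_eigenspace :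
    xSpecial r k t ∈ Module.End.eigenspace (Matrix.toLin' ((ktSplit r k t).lapMatrix ℝ))
      ((k : ℝ) + t) := by
  rw [Module.End.mem_eigenspace_iff, Matrix.toLin'_apply]
  funext v
  rcases v with p | p <;> rcases p with ⟨i, c⟩
  · rw [ktSplit_lap_inl]
    simp only [xSpecial, Sum.elim_inl, Sum.elim_inr, Finset.sum_const, Finset.card_univ,
      Fintype.card_prod, Fintype.card_fin, nsmul_eq_mul, Pi.smul_apply, smul_eq_mul]
    push_cast
    ring
  · rw [ktSplit_lap_inr]
    simp only [xSpecial, Sum.elim_inl, Sum.elim_inr, Finset.sum_const, Finset.card_univ,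
      Fintype.card_fin, nsmul_eq_mul, Pi.smul_apply, smul_eq_mul]
    push_cast
    ring

lemma PhiT_injective : Function.Injective (PhiT r k t) := by
  intro y z h
  funext p
  have := congrFun h (Sum.inr p)
  simpa [PhiT] using this

lemma PhiK_injective : Function.Injective (PhiK r k t) := by
  intro y z h
  funext p
  have := congrFun h (Sum.inl p)
  simpa [PhiK] using this

lemma ktSplit_preconnected (hr : 1 ≤ r) (hk : 1 ≤ k) : (ktSplit r k t).Preconnected := by
  have a0 : Fin k := ⟨0, hk⟩
  have reach_inl : ∀ (p : Fin r × Fin k) (u : (Fin r × Fin k) ⊕ (Fin r × Fin t)),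
      (ktSplit r k t).Reachable (Sum.inl p) u := by
    intro p u
    rcases u with q | q
    · by_cases h : p = q
      · rw [h]
      · exact SimpleGraph.Adj.reachable (by simpa [ktSplit] using h)
    · have h1 : (ktSplit r k t).Reachable (Sum.inl p) (Sum.inl (q.1, a0)) := by
        by_cases h : p = (q.1, a0)
        · rw [h]
        · exact SimpleGraph.Adj.reachable (by simpa [ktSplit] using h)
      have h2 : (ktSplit r k t).Adj (Sum.inl (q.1, a0)) (Sum.inr q) := by
        simp [ktSplit]
      exact h1.trans h2.reachable
  intro u v
  rcases u with p | p
  · exact reach_inl p v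
  · have := reach_inl (p.1, a0) (Sum.inr p)
    have h2 := reach_inl (p.1, a0) v
    exact this.symm.trans h2

private lemma sum_count_le_card_filter (S : Finset ℝ) (m : Multiset ℝ) (P : ℝ → Prop)
    [DecidablePred P] (hS : ∀ x ∈ S, P x) : ∑ μ ∈ S, m.count μ ≤ Multiset.card (m.filter P) := by
  have h1 : ∀ μ ∈ S, m.count μ = (m.filter P).count μ := fun μ hμ =>
    (Multiset.count_filter_of_pos (hS μ hμ)).symm
  rw [Finset.sum_congr rfl h1]
  calc ∑ μ ∈ S, (m.filter P).count μ
      = ∑ μ ∈ S ∩ (m.filter P).toFinset, (m.filter P).count μ := by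
        refine (Finset.sum_subset Finset.inter_subset_left ?_).symm
        intro x hx hxn
        rw [Multiset.count_eq_zero]
        intro hmem
        exact hxn (Finset.mem_inter.mpr ⟨hx, Multiset.mem_toFinset.mpr hmem⟩)
    _ ≤ ∑ μ ∈ (m.filter P).toFinset, (m.filter P).count μ :=
        Finset.sum_le_sum_of_subset Finset.inter_subset_right
    _ = Multiset.card (m.filter P) := Multiset.toFinset_sum_count_eq _


lemma eigenspace_zero_rank (hr : 1 ≤ r) (hk : 1 ≤ k) :
    Module.finrank ℝ
      (Module.End.eigenspace (Matrix.toLin' ((ktSplit r k t).lapMatrix ℝ)) 0) = 1 := by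
  rw [Module.End.eigenspace_zero,
    ← SimpleGraph.card_connectedComponent_eq_finrank_ker_toLin'_lapMatrix (G := ktSplit r k t)]
  have v0 : (Fin r × Fin k) ⊕ (Fin r × Fin t) := Sum.inl (⟨0, hr⟩, ⟨0, hk⟩)
  refine Fintype.card_eq_one_iff.mpr ⟨(ktSplit r k t).connectedComponentMk v0, ?_⟩
  intro y
  refine SimpleGraph.ConnectedComponent.ind (fun u => ?_) y
  exact SimpleGraph.ConnectedComponent.sound (ktSplit_preconnected hr hk u v0)

lemma eigenspace_k_rank (ht : 1 ≤ t) :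
    r * t - r ≤ Module.finrank ℝ
      (Module.End.eigenspace (Matrix.toLin' ((ktSplit r k t).lapMatrix ℝ)) (k : ℝ)) := by
  haveI : Nonempty (Fin t) := ⟨⟨0, ht⟩⟩
  have hle : Submodule.map (PhiT r k t) (LinearMap.ker (psiMap r (Fin t)))
      ≤ Module.End.eigenspace (Matrix.toLin' ((ktSplit r k t).lapMatrix ℝ)) (k : ℝ) := by
    rintro x ⟨y, hy, rfl⟩
    exact PhiT_mem_eigenspace y hy
  have heq : Module.finrank ℝ
      (Submodule.map (PhiT r k t) (LinearMap.ker (psiMap r (Fin t))))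
        = r * t - r := by
    rw [← (Submodule.equivMapOfInjective _ PhiT_injective
      (LinearMap.ker (psiMap r (Fin t)))).finrank_eq]
    simpa using finrank_ker_psiMap r (Fin t)
  rw [← heq]
  exact Submodule.finrank_mono hle

lemma eigenspace_rkt_rank (hk : 1 ≤ k) :
    r * k - r ≤ Module.finrank ℝ
      (Module.End.eigenspace (Matrix.toLin' ((ktSplit r k t).lapMatrix ℝ))
        ((r : ℝ) * k + t)) := by
  haveI : Nonempty (Fin k) := ⟨⟨0, hk⟩⟩
  have hle : Submodule.map (PhiK r k t) (LinearMap.ker (psiMap r (Fin k)))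
      ≤ Module.End.eigenspace (Matrix.toLin' ((ktSplit r k t).lapMatrix ℝ))
        ((r : ℝ) * k + t) := by
    rintro x ⟨y, hy, rfl⟩
    exact PhiK_mem_eigenspace y hy
  have heq : Module.finrank ℝ
      (Submodule.map (PhiK r k t) (LinearMap.ker (psiMap r (Fin k))))
        = r * k - r := by
    rw [← (Submodule.equivMapOfInjective _ PhiK_injective
      (LinearMap.ker (psiMap r (Fin k)))).finrank_eq]
    simpa using finrank_ker_psiMap r (Fin k)
  rw [← heq]
  exact Submodule.finrank_mono hle

lemma xSpecial_ne_zero (hr : 1 ≤ r) (hk : 1 ≤ k) (ht : 1 ≤ t) : xSpecial r k t ≠ 0 := by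
  intro h
  have := congrFun h (Sum.inl (⟨0, hr⟩, ⟨0, hk⟩))
  simp only [xSpecial, Sum.elim_inl, Pi.zero_apply] at this
  have ht' : (1 : ℝ) ≤ t := by exact_mod_cast ht
  linarith

lemma eigenspace_kt_rank (hr : 1 ≤ r) (hk : 1 ≤ k) (ht : 1 ≤ t) :
    1 ≤ Module.finrank ℝ
      (Module.End.eigenspace (Matrix.toLin' ((ktSplit r k t).lapMatrix ℝ))
        ((k : ℝ) + t)) := by
  have hle : Submodule.span ℝ {xSpecial r k t}
      ≤ Module.End.eigenspace (Matrix.toLin' ((ktSplit r k t).lapMatrix ℝ)) ((k : ℝ) + t) := by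
    rw [Submodule.span_le, Set.singleton_subset_iff]
    exact xSpecial_mem_eigenspace
  have heq : Module.finrank ℝ (Submodule.span ℝ {xSpecial r k t}) = 1 :=
    finrank_span_singleton (xSpecial_ne_zero hr hk ht)
  rw [← heq]
  exact Submodule.finrank_mono hle

lemma eigenspace_kt_rank_r1 (hr : r = 1) (hk : 1 ≤ k) (ht : 1 ≤ t) :
    k ≤ Module.finrank ℝ
      (Module.End.eigenspace (Matrix.toLin' ((ktSplit r k t).lapMatrix ℝ))
        ((k : ℝ) + t)) := by
  subst hr
  haveI : Nonempty (Fin k) := ⟨⟨0, hk⟩⟩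
  set M := Submodule.map (PhiK 1 k t) (LinearMap.ker (psiMap 1 (Fin k))) with hM
  have hval : ((1 : ℕ) : ℝ) * k + t = (k : ℝ) + t := by push_cast; ring
  have hle : M ⊔ Submodule.span ℝ {xSpecial 1 k t}
      ≤ Module.End.eigenspace (Matrix.toLin' ((ktSplit 1 k t).lapMatrix ℝ)) ((k : ℝ) + t) := by
    refine sup_le ?_ ?_
    · rintro x ⟨y, hy, rfl⟩
      have := PhiK_mem_eigenspace (r := 1) (t := t) y hy
      rwa [hval] at this
    · rw [Submodule.span_le, Set.singleton_subset_iff]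
      exact xSpecial_mem_eigenspace
  have hdisj : M ⊓ Submodule.span ℝ {xSpecial 1 k t} = ⊥ := by
    rw [Submodule.eq_bot_iff]
    rintro x ⟨hx1, hx2⟩
    obtain ⟨y, _, rfl⟩ := hx1
    obtain ⟨s, hs⟩ := Submodule.mem_span_singleton.mp hx2
    have heval := congrFun hs (Sum.inr (⟨0, Nat.one_pos⟩, ⟨0, ht⟩))
    simp only [PhiK, xSpecial, LinearMap.coe_mk, AddHom.coe_mk, Sum.elim_inr, Pi.smul_apply,
      Pi.zero_apply, smul_eq_mul] at heval
    have hk' : (1 : ℝ) ≤ k := by exact_mod_cast hk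
    have hs0 : s = 0 := by
      rcases mul_eq_zero.mp heval with h | h
      · exact h
      · exfalso
        rw [neg_eq_zero] at h
        linarith
    rw [← hs, hs0, zero_smul]
  have hsum := Submodule.finrank_sup_add_finrank_inf_eq M (Submodule.span ℝ {xSpecial 1 k t})
  rw [hdisj] at hsum
  simp only [finrank_bot, add_zero] at hsum
  have h1 : Module.finrank ℝ M = 1 * k - 1 := by
    rw [hM, ← (Submodule.equivMapOfInjective _ PhiK_injective
      (LinearMap.ker (psiMap 1 (Fin k)))).finrank_eq]
    simpa using finrank_ker_psiMap 1 (Fin k)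
  have h2 : Module.finrank ℝ (Submodule.span ℝ {xSpecial 1 k t}) = 1 :=
    finrank_span_singleton (xSpecial_ne_zero le_rfl hk ht)
  have hmono := Submodule.finrank_mono hle
  rw [hsum, h1, h2] at hmono
  omega

section Herm
variable {n : Type*} [Fintype n] [DecidableEq n]


lemma charpoly_of_hermitian (A : Matrix n n ℝ) (hA : A.IsHermitian) :
    A.charpoly = (Finset.univ.val.map fun i => X - C (hA.eigenvalues i)).prod := by
  classical
  have hspec := hA.spectral_theorem
  set U : Matrix n n ℝ := (hA.eigenvectorUnitary : Matrix n n ℝ) with hUdef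
  have hU1 : U * star U = 1 := (Matrix.mem_unitaryGroup_iff).mp hA.eigenvectorUnitary.2
  have hU2 : star U * U = 1 := (Matrix.mem_unitaryGroup_iff').mp hA.eigenvectorUnitary.2
  set D : Matrix n n ℝ := diagonal (RCLike.ofReal ∘ hA.eigenvalues) with hDdef
  set F : Matrix n n ℝ →+* Matrix n n ℝ[X] := (C : ℝ →+* ℝ[X]).mapMatrix with hF
  have hcomm : ∀ M : Matrix n n ℝ[X], Matrix.scalar n (X : ℝ[X]) * M
      = M * Matrix.scalar n (X : ℝ[X]) :=
    fun M => (Matrix.scalar_commute (X : ℝ[X]) (fun r' => Commute.all _ _) M).eq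
  have hcm : charmatrix A = F U * charmatrix D * F (star U) := by
    rw [charmatrix, charmatrix, mul_sub, sub_mul, ← hcomm (F U), mul_assoc,
      ← F.map_mul, hU1, F.map_one, mul_one, ← F.map_mul, ← F.map_mul, ← (show A = U * D * star U from hspec)]
  have h2 : A.charpoly = D.charpoly := by
    rw [Matrix.charpoly, Matrix.charpoly, hcm, det_mul, det_mul, mul_comm, ← mul_assoc,
      ← det_mul, ← F.map_mul, hU2, F.map_one, det_one, one_mul]
  rw [h2, Matrix.charpoly]
  have h3 : charmatrix D = diagonal fun i => X - C (hA.eigenvalues i) := by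
    rw [charmatrix]
    ext i j
    by_cases h : i = j <;>
      simp [h, hDdef, diagonal, RingHom.mapMatrix_apply, Matrix.scalar, Matrix.one_apply]
  rw [h3, det_diagonal, Finset.prod_eq_multiset_prod]

lemma finrank_eigenspace_le_count (A : Matrix n n ℝ) (hA : A.IsHermitian) (μ : ℝ) :
    Module.finrank ℝ (Module.End.eigenspace (Matrix.toLin' A) μ)
      ≤ A.charpoly.roots.count μ := by
  classical
  -- the eigenvector family, as vectors in `n → ℝ`
  set v : n → (n → ℝ) := fun j => ⇑(hA.eigenvectorBasis j) with hv
  have hvE : ∀ j, Matrix.toLin' A (v j) = hA.eigenvalues j • v j := by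
    intro j
    rw [Matrix.toLin'_apply]
    exact hA.mulVec_eigenvectorBasis j
  have hli : LinearIndependent ℝ v := by
    have h1 : LinearIndependent ℝ (fun j => hA.eigenvectorBasis j) :=
      hA.eigenvectorBasis.toBasis.linearIndependent
    have h2 := h1.map' (WithLp.linearEquiv 2 ℝ (∀ _ : n, ℝ)).toLinearMap
      (WithLp.linearEquiv 2 ℝ (∀ _ : n, ℝ)).ker
    exact h2
  -- subfamily with eigenvalue ≠ μ
  set s : Finset n := Finset.univ.filter (fun j => hA.eigenvalues j ≠ μ) with hs
  set W : Submodule ℝ (n → ℝ) := Submodule.span ℝ (v '' s) with hW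
  have hWle : W ≤ ⨆ ν, ⨆ _ : ν ≠ μ, Module.End.eigenspace (Matrix.toLin' A) ν := by
    rw [hW, Submodule.span_le]
    rintro x ⟨j, hj, rfl⟩
    rw [hs] at hj
    simp only [Finset.coe_filter, Set.mem_setOf_eq] at hj
    refine Submodule.mem_iSup_of_mem (hA.eigenvalues j) ?_
    refine Submodule.mem_iSup_of_mem hj.2 ?_
    rw [Module.End.mem_eigenspace_iff]
    exact hvE j
  have hdisj : Disjoint (Module.End.eigenspace (Matrix.toLin' A) μ) W := by
    refine Disjoint.mono_right hWle ?_
    have := (Module.End.independent_genEigenspace (Matrix.toLin' A) (1 : ℕ∞))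
    have h := iSupIndep_def.mp this μ
    simpa [Module.End.eigenspace] using h
  have hWrank : Module.finrank ℝ W = s.card := by
    rw [hW]
    have h4 : v '' ↑s = Set.range (v ∘ (Subtype.val : {x // x ∈ s} → n)) := by
      rw [Set.range_comp]
      congr 1
      ext x
      simp
    rw [h4, finrank_span_eq_card ((hli.comp _ Subtype.val_injective))]
    simp
  have hsum : Module.finrank ℝ (Module.End.eigenspace (Matrix.toLin' A) μ)
      + Module.finrank ℝ W ≤ Fintype.card n := by
    have := Submodule.finrank_sup_add_finrank_inf_eq
      (Module.End.eigenspace (Matrix.toLin' A) μ) W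
    have hbot : Module.finrank ℝ
        ↥(Module.End.eigenspace (Matrix.toLin' A) μ ⊓ W) = 0 := by
      rw [hdisj.eq_bot]; simp
    have hle := Submodule.finrank_le
      (Module.End.eigenspace (Matrix.toLin' A) μ ⊔ W)
    rw [hbot, add_zero] at this
    rw [← this]
    simpa using hle
  have hcount : A.charpoly.roots.count μ = Fintype.card n - s.card := by
    rw [charpoly_of_hermitian A hA,
      show (fun i => X - C (hA.eigenvalues i)) = ((fun a => X - C a) ∘ hA.eigenvalues)
        from rfl, ← Multiset.map_map,
      Polynomial.roots_multiset_prod_X_sub_C, Multiset.count_map]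
    have : Fintype.card n = s.card +
        (Multiset.filter (fun a => μ = hA.eigenvalues a) Finset.univ.val).card := by
      rw [hs]
      rw [← Finset.card_univ]
      have := Finset.card_filter_add_card_filter_not
        (s := (Finset.univ : Finset n)) (p := fun j => hA.eigenvalues j ≠ μ)
      rw [← this]
      congr 1
      have hpq : (Multiset.filter (fun a => ¬hA.eigenvalues a ≠ μ) Finset.univ.val)
          = (Multiset.filter (fun a => μ = hA.eigenvalues a) Finset.univ.val) := by
        refine Multiset.filter_congr (fun x _ => ?_)
        constructor
        · intro h; exact (not_ne_iff.mp h).symm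
        · intro h; exact not_ne_iff.mpr h.symm
      rw [Finset.card, Finset.filter_val, hpq]
    omega
  rw [hcount]
  rw [hWrank] at hsum
  omega

end Herm

/-- The Laplacian of a `(k,t)`-split graph with `r` parts has eigenvalue `0`
with multiplicity `1`, eigenvalue `k` with multiplicity at least `r(t-1)`, eigenvalue
`rk + t` with multiplicity at least `r(k-1)`, and eigenvalue `k + t` with multiplicity at
least `1`; in particular it has at least `n - 2r + 2` integer Laplacian eigenvalues
(counted with multiplicity), where `n = (k + t)r`. -/
theorem stmt_15 (r k t : ℕ) (hr : 1 ≤ r) (hk : 1 ≤ k) (ht : 1 ≤ t) :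
    Module.finrank ℝ
        (Module.End.eigenspace (Matrix.toLin' ((ktSplit r k t).lapMatrix ℝ)) 0) = 1 ∧
      r * (t - 1) ≤ Module.finrank ℝ
        (Module.End.eigenspace (Matrix.toLin' ((ktSplit r k t).lapMatrix ℝ)) (k : ℝ)) ∧
      r * (k - 1) ≤ Module.finrank ℝ
        (Module.End.eigenspace (Matrix.toLin' ((ktSplit r k t).lapMatrix ℝ))
          ((r : ℝ) * k + t)) ∧
      1 ≤ Module.finrank ℝ
        (Module.End.eigenspace (Matrix.toLin' ((ktSplit r k t).lapMatrix ℝ))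
          ((k : ℝ) + t)) ∧
      (k + t) * r - 2 * r + 2 ≤
        (((ktSplit r k t).lapMatrix ℝ).charpoly.roots.filter
          fun x => ∃ z : ℤ, (z : ℝ) = x).card := by
  have hmt : r * (t - 1) = r * t - r := by cases t <;> simp [Nat.mul_succ]
  have hmk : r * (k - 1) = r * k - r := by cases k <;> simp [Nat.mul_succ]
  have P1 := eigenspace_zero_rank (t := t) hr hk
  have P2 := eigenspace_k_rank (r := r) (k := k) ht
  have P3 := eigenspace_rkt_rank (r := r) (t := t) hk
  have P4 := eigenspace_kt_rank hr hk ht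
  refine ⟨P1, by rw [hmt]; exact P2, by rw [hmk]; exact P3, P4, ?_⟩
  -- part 5
  have hHerm : ((ktSplit r k t).lapMatrix ℝ).IsHermitian :=
    (SimpleGraph.posSemidef_lapMatrix ℝ (ktSplit r k t)).1
  have hcount := finrank_eigenspace_le_count _ hHerm
  set m := ((ktSplit r k t).lapMatrix ℝ).charpoly.roots with hm
  have hk' : (1 : ℝ) ≤ (k : ℝ) := by exact_mod_cast hk
  have ht' : (1 : ℝ) ≤ (t : ℝ) := by exact_mod_cast ht
  have hr' : (1 : ℝ) ≤ (r : ℝ) := by exact_mod_cast hr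
  have c0 : 1 ≤ m.count 0 := le_trans (le_of_eq P1.symm) (hcount 0)
  have ck : r * t - r ≤ m.count (k : ℝ) := le_trans P2 (hcount _)
  have crk : r * k - r ≤ m.count ((r : ℝ) * k + t) := le_trans P3 (hcount _)
  have ckt : 1 ≤ m.count ((k : ℝ) + t) := le_trans P4 (hcount _)
  by_cases hr1 : r = 1
  · -- r = 1 : eigenvalues 0, k, k+t with multiplicities ≥ 1, t-1, k
    have ckt' : k ≤ m.count ((k : ℝ) + t) :=
      le_trans (eigenspace_kt_rank_r1 hr1 hk ht) (hcount _)
    have hn1 : (0 : ℝ) ∉ ({(k : ℝ), (k : ℝ) + t} : Finset ℝ) := by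
      simp only [Finset.mem_insert, Finset.mem_singleton]
      push_neg
      exact ⟨by intro h; linarith, by intro h; linarith⟩
    have hn2 : (k : ℝ) ∉ ({(k : ℝ) + t} : Finset ℝ) := by
      simp only [Finset.mem_singleton]
      intro h; linarith
    have hbound := sum_count_le_card_filter ({0, (k : ℝ), (k : ℝ) + t} : Finset ℝ) m
      (fun x => ∃ z : ℤ, (z : ℝ) = x) (by
        intro x hx
        simp only [Finset.mem_insert, Finset.mem_singleton] at hx
        rcases hx with rfl | rfl | rfl
        · exact ⟨0, by norm_num⟩
        · exact ⟨k, by push_cast; ring⟩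
        · exact ⟨k + t, by push_cast; ring⟩)
    rw [Finset.sum_insert hn1, Finset.sum_insert hn2, Finset.sum_singleton] at hbound
    subst hr1
    omega
  · -- r ≥ 2 : four distinct eigenvalues
    have hr2 : 2 ≤ r := by omega
    have hr2' : (2 : ℝ) ≤ (r : ℝ) := by exact_mod_cast hr2
    have h2k : 2 * (k : ℝ) ≤ (r : ℝ) * k := by nlinarith
    have hn1 : (0 : ℝ) ∉ ({(k : ℝ), (r : ℝ) * k + t, (k : ℝ) + t} : Finset ℝ) := by
      simp only [Finset.mem_insert, Finset.mem_singleton]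
      push_neg
      exact ⟨by intro h; linarith, by intro h; linarith, by intro h; linarith⟩
    have hn2 : (k : ℝ) ∉ ({(r : ℝ) * k + t, (k : ℝ) + t} : Finset ℝ) := by
      simp only [Finset.mem_insert, Finset.mem_singleton]
      push_neg
      exact ⟨by intro h; linarith, by intro h; linarith⟩
    have hn3 : (r : ℝ) * k + t ∉ ({(k : ℝ) + t} : Finset ℝ) := by
      simp only [Finset.mem_singleton]
      intro h; linarith
    have hbound := sum_count_le_card_filter
      ({0, (k : ℝ), (r : ℝ) * k + t, (k : ℝ) + t} : Finset ℝ) m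
      (fun x => ∃ z : ℤ, (z : ℝ) = x) (by
        intro x hx
        simp only [Finset.mem_insert, Finset.mem_singleton] at hx
        rcases hx with rfl | rfl | rfl | rfl
        · exact ⟨0, by norm_num⟩
        · exact ⟨k, by push_cast; ring⟩
        · exact ⟨r * k + t, by push_cast; ring⟩
        · exact ⟨k + t, by push_cast; ring⟩)
    rw [Finset.sum_insert hn1, Finset.sum_insert hn2, Finset.sum_insert hn3,
      Finset.sum_singleton] at hbound
    have key : (k + t) * r = r * k + r * t := by ring
    rw [key]
    set A := r * k
    set B := r * t
    omega
end

section
/- Let G be a (k,t)-split graph with r ≥ 2 parts (as defined). Then the algebraic connectivity a(G) is strictly less than the vertex connectivity κ(G) = k. -/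
open SimpleGraph Matrix

open scoped Classical

section Aux

open Finset


lemma sum_ite_zero' {n : ℕ} [NeZero n] (a b : ℝ) :
    ∑ i : Fin n, (if i = 0 then a else b) = a - b + n * b := by
  have h : ∀ i : Fin n, (if i = 0 then a else b) = (if i = 0 then a - b else 0) + b := by
    intro i; split <;> ring
  simp_rw [h]
  rw [Finset.sum_add_distrib, Finset.sum_ite_eq' Finset.univ (0 : Fin n) (fun _ => a - b)]
  simp [mul_comm]

lemma sum_pair_fst {n m : ℕ} (f : Fin n → ℝ) (c : Fin n → Prop) [DecidablePred c] :
    ∑ p : Fin n × Fin m, (if c p.1 then f p.1 else 0) = m * ∑ i, (if c i then f i else 0) := by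
  rw [Fintype.sum_prod_type]
  simp [Finset.sum_const, Finset.card_univ, nsmul_eq_mul, Finset.mul_sum]

lemma sum_pair_ne {n m : ℕ} (f : Fin n → ℝ) (q : Fin n × Fin m) :
    ∑ p : Fin n × Fin m, (if q ≠ p then f p.1 else 0) = m * (∑ i, f i) - f q.1 := by
  have h : ∀ p : Fin n × Fin m, (if q ≠ p then f p.1 else 0)
      = f p.1 - (if p = q then f p.1 else 0) := by
    intro p
    by_cases h : p = q
    · subst h; simp
    · rw [if_pos (fun e => h e.symm), if_neg h, sub_zero]
  simp_rw [h]
  rw [Finset.sum_sub_distrib, Finset.sum_ite_eq' Finset.univ q (fun p => f p.1)]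
  simp [Fintype.sum_prod_type, Finset.sum_const, Finset.card_univ, nsmul_eq_mul, Finset.mul_sum,
    mul_comm]
  rw [Finset.sum_mul]


lemma ktSplit_adj_ll {r k t : ℕ} (a b : Fin r × Fin k) :
    (ktSplit r k t).Adj (Sum.inl a) (Sum.inl b) ↔ a ≠ b := Iff.rfl
lemma ktSplit_adj_lr {r k t : ℕ} (a : Fin r × Fin k) (b : Fin r × Fin t) :
    (ktSplit r k t).Adj (Sum.inl a) (Sum.inr b) ↔ a.1 = b.1 := Iff.rfl
lemma ktSplit_adj_rl {r k t : ℕ} (a : Fin r × Fin t) (b : Fin r × Fin k) :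
    (ktSplit r k t).Adj (Sum.inr a) (Sum.inl b) ↔ a.1 = b.1 := Iff.rfl
lemma ktSplit_adj_rr {r k t : ℕ} (a b : Fin r × Fin t) :
    (ktSplit r k t).Adj (Sum.inr a) (Sum.inr b) ↔ False := iff_false_intro (fun h => h)

lemma eig_exists (r k t : ℕ) {μ : ℝ}
    (hquad : μ ^ 2 - ((k:ℝ)+1 + ((r:ℝ)+2) * ((k:ℝ)+1) + ((t:ℝ)+1)) * μ
      + ((r:ℝ)+2) * ((k:ℝ)+1) ^ 2 = 0) :
    ∃ y : ((Fin (r+2) × Fin (k+1)) ⊕ (Fin (r+2) × Fin (t+1))) → ℝ,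
      y ≠ 0 ∧ (ktSplit (r+2) (k+1) (t+1)).lapMatrix ℝ *ᵥ y = μ • y := by
  refine ⟨Sum.elim (fun p => if p.1 = 0 then ((r:ℝ)+1) * (((k:ℝ)+1) - μ) else -(((k:ℝ)+1) - μ))
      (fun p => if p.1 = 0 then ((r:ℝ)+1) * ((k:ℝ)+1) else -((k:ℝ)+1)), ?_, ?_⟩
  · intro h
    have h0 := congrFun h (Sum.inr (0, 0))
    simp only [Sum.elim_inr, eq_self_iff_true, if_true, Pi.zero_apply] at h0
    have : (0:ℝ) < ((r:ℝ)+1) * ((k:ℝ)+1) := by positivity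
    rw [h0] at this; exact lt_irrefl 0 this
  · funext v
    rw [lapMatrix_mulVec_apply, degree_eq_sum_if_adj, neighborFinset_eq_filter,
      Finset.sum_filter, Pi.smul_apply, smul_eq_mul]
    rcases v with ⟨i, m⟩ | ⟨i, j⟩
    · simp only [Fintype.sum_sum_type, ktSplit_adj_ll, ktSplit_adj_lr, Sum.elim_inl,
        Sum.elim_inr]
      rw [sum_pair_ne (fun _ => (1:ℝ)) (i, m),
          sum_pair_fst (fun _ => (1:ℝ)) (fun a => i = a),
          sum_pair_ne (fun a : Fin (r+2) =>
            if a = 0 then ((r:ℝ)+1) * (((k:ℝ)+1) - μ) else -(((k:ℝ)+1) - μ)) (i, m),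
          sum_pair_fst (fun a : Fin (r+2) =>
            if a = 0 then ((r:ℝ)+1) * ((k:ℝ)+1) else -((k:ℝ)+1)) (fun a => i = a),
          sum_ite_zero']
      simp only [Finset.sum_ite_eq, Finset.mem_univ, if_true, Finset.sum_const,
        Finset.card_univ, nsmul_eq_mul, Fintype.card_fin, mul_one]
      rcases eq_or_ne i 0 with h0 | h0
      · simp only [h0, if_true, eq_self_iff_true]
        push_cast
        linear_combination ((r:ℝ)+1) * hquad
      · simp only [if_neg h0]
        push_cast
        linear_combination (-1:ℝ) * hquad
    · simp only [Fintype.sum_sum_type, ktSplit_adj_rl, ktSplit_adj_rr, Sum.elim_inl,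
        Sum.elim_inr, if_false]
      rw [sum_pair_fst (fun _ => (1:ℝ)) (fun a => i = a),
          sum_pair_fst (fun a : Fin (r+2) =>
            if a = 0 then ((r:ℝ)+1) * (((k:ℝ)+1) - μ) else -(((k:ℝ)+1) - μ)) (fun a => i = a)]
      simp only [Finset.sum_ite_eq, Finset.mem_univ, if_true, Finset.sum_const,
        Finset.card_univ, nsmul_eq_mul, Fintype.card_fin, mul_one, Finset.sum_const_zero, add_zero]
      rcases eq_or_ne i 0 with h0 | h0
      · simp only [h0, if_true, eq_self_iff_true]
        push_cast
        ring
      · simp only [if_neg h0]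
        push_cast
        ring

lemma alg_lt (r k t : ℕ) :
    sInf {μ : ℝ | μ ≠ 0 ∧ ∃ y : ((Fin (r+2) × Fin (k+1)) ⊕ (Fin (r+2) × Fin (t+1))) → ℝ,
      y ≠ 0 ∧ (ktSplit (r+2) (k+1) (t+1)).lapMatrix ℝ *ᵥ y = μ • y} < ((k:ℝ)+1) := by
  have hRpos : (0:ℝ) < (r:ℝ) + 2 := by positivity
  have hKpos : (0:ℝ) < (k:ℝ) + 1 := by positivity
  have hTpos : (0:ℝ) < (t:ℝ) + 1 := by positivity
  set b : ℝ := ((k:ℝ)+1) + ((r:ℝ)+2) * ((k:ℝ)+1) + ((t:ℝ)+1) with hb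
  set d : ℝ := b ^ 2 - 4 * ((r:ℝ)+2) * ((k:ℝ)+1) ^ 2 with hd
  have hdpos : 0 < d := by
    rw [hd, hb]; nlinarith [sq_nonneg (((r:ℝ)+2) * ((k:ℝ)+1) + ((t:ℝ)+1) - ((k:ℝ)+1)),
      mul_pos hKpos hTpos]
  have hs2 : Real.sqrt d ^ 2 = d := Real.sq_sqrt hdpos.le
  have hs0 : 0 ≤ Real.sqrt d := Real.sqrt_nonneg d
  set μ : ℝ := (b - Real.sqrt d) / 2 with hμ
  have hbpos : 0 < b := by rw [hb]; positivity
  have hquad : μ ^ 2 - b * μ + ((r:ℝ)+2) * ((k:ℝ)+1) ^ 2 = 0 := by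
    rw [hμ]; linear_combination hs2 / 4
  have hμpos : 0 < μ := by
    rw [hμ]
    have hsb : Real.sqrt d < b := by
      nlinarith [hs2, hs0, hd, mul_pos (mul_pos hRpos hKpos) hKpos]
    linarith
  have hμK : μ < (k:ℝ) + 1 := by
    rw [hμ]
    have h1 : 0 < b - 2 * ((k:ℝ)+1) := by rw [hb]; nlinarith
    have h2 : (b - 2 * ((k:ℝ)+1)) ^ 2 < d := by
      rw [hd]; nlinarith [mul_pos hKpos hTpos]
    nlinarith [hs2, hs0, h1, h2]
  obtain ⟨y, hy0, heig⟩ := eig_exists r k t (by rw [← hb]; exact hquad)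
  have hmem : μ ∈ {μ : ℝ | μ ≠ 0 ∧ ∃ y : ((Fin (r+2) × Fin (k+1)) ⊕ (Fin (r+2) × Fin (t+1))) → ℝ,
      y ≠ 0 ∧ (ktSplit (r+2) (k+1) (t+1)).lapMatrix ℝ *ᵥ y = μ • y} := ⟨hμpos.ne', y, hy0, heig⟩
  have hbdd : BddBelow {μ : ℝ | μ ≠ 0 ∧ ∃ y : ((Fin (r+2) × Fin (k+1)) ⊕ (Fin (r+2) × Fin (t+1))) → ℝ,
      y ≠ 0 ∧ (ktSplit (r+2) (k+1) (t+1)).lapMatrix ℝ *ᵥ y = μ • y} := by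
    refine ⟨0, ?_⟩
    rintro ν ⟨hν, z, hz0, hzeig⟩
    have hpsd := (posSemidef_lapMatrix ℝ (ktSplit (r+2) (k+1) (t+1))).dotProduct_mulVec_nonneg z
    rw [hzeig] at hpsd
    have hdot : star z ⬝ᵥ (ν • z) = ν * (z ⬝ᵥ z) := by
      simp only [star_trivial, dotProduct, Pi.smul_apply, smul_eq_mul, Finset.mul_sum]
      exact Finset.sum_congr rfl (fun i _ => by ring)
    have hzz : 0 < z ⬝ᵥ z := by
      obtain ⟨i, hi⟩ := Function.ne_iff.mp hz0
      exact Finset.sum_pos' (fun i _ => mul_self_nonneg _)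
        ⟨i, Finset.mem_univ _, mul_self_pos.mpr hi⟩
    rw [hdot] at hpsd
    exact nonneg_of_mul_nonneg_right (by linarith [hpsd] : 0 ≤ z ⬝ᵥ z * ν) hzz
  exact lt_of_le_of_lt (csInf_le hbdd hmem) hμK


lemma isolated_reach {V : Type*} {H : SimpleGraph V} {a b : V}
    (ha : ∀ w, ¬ H.Adj a w) (h : H.Reachable a b) : a = b := by
  obtain ⟨w⟩ := h
  cases w with
  | nil => rfl
  | cons h' _ => exact absurd h' (ha _)

lemma vc_eq (r k t : ℕ) :
    sInf {m | ∃ S : Finset ((Fin (r+2) × Fin (k+1)) ⊕ (Fin (r+2) × Fin (t+1))), S.card = m ∧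
      ¬ ((ktSplit (r+2) (k+1) (t+1)).induce ((↑S : Set ((Fin (r+2) × Fin (k+1)) ⊕ (Fin (r+2) × Fin (t+1))))ᶜ)).Preconnected} = k + 1 := by
  set V := (Fin (r+2) × Fin (k+1)) ⊕ (Fin (r+2) × Fin (t+1)) with hV
  set G := ktSplit (r+2) (k+1) (t+1) with hG
  have hinj : ∀ i : Fin (r+2), Function.Injective (fun m : Fin (k+1) => (Sum.inl (i, m) : V)) := by
    intro i a b h; simpa using h
  have hmem : (k+1) ∈ {m | ∃ S : Finset V, S.card = m ∧
      ¬ (G.induce ((↑S : Set V)ᶜ)).Preconnected} := by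
    refine ⟨Finset.image (fun m => Sum.inl (0, m)) Finset.univ, ?_, ?_⟩
    · rw [Finset.card_image_of_injective _ (hinj 0)]; simp
    · intro hpre
      set S : Finset V := Finset.image (fun m => Sum.inl (0, m)) Finset.univ with hS
      have ha : (Sum.inr ((0 : Fin (r+2)), (0 : Fin (t+1))) : V) ∈ ((↑S : Set V)ᶜ) := by
        simp [hS]
      have hb : (Sum.inl ((1 : Fin (r+2)), (0 : Fin (k+1))) : V) ∈ ((↑S : Set V)ᶜ) := by
        simp [hS]
      have := hpre ⟨_, ha⟩ ⟨_, hb⟩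
      have heq := isolated_reach (H := G.induce ((↑S : Set V)ᶜ)) ?_ this
      · exact absurd (congrArg Subtype.val heq) (by simp)
      · rintro ⟨(⟨i, m⟩ | ⟨i, j⟩), hw⟩ hadj
        · have h0 : (0 : Fin (r+2)) = i := hadj
          apply hw
          simp [hS, ← h0]
        · exact hadj
  have hlow : ∀ m ∈ {m | ∃ S : Finset V, S.card = m ∧
      ¬ (G.induce ((↑S : Set V)ᶜ)).Preconnected}, (k+1) ≤ m := by
    rintro m ⟨S, rfl, hnp⟩
    by_contra hlt
    push_neg at hlt
    apply hnp
    have hub : ∀ u : ((↑S : Set V)ᶜ : Set V), ∃ p : Fin (r+2) × Fin (k+1),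
        ∃ hp : (Sum.inl p : V) ∈ ((↑S : Set V)ᶜ),
          (G.induce ((↑S : Set V)ᶜ)).Reachable u ⟨Sum.inl p, hp⟩ := by
      rintro ⟨(⟨i, m⟩ | ⟨i, j⟩), hu⟩
      · exact ⟨(i, m), hu, Reachable.refl _⟩
      · have : ∃ m : Fin (k+1), (Sum.inl (i, m) : V) ∉ S := by
          by_contra hall
          push_neg at hall
          have hsub : Finset.image (fun m => (Sum.inl (i, m) : V)) Finset.univ ⊆ S := by
            intro x hx; simp only [Finset.mem_image] at hx
            obtain ⟨m, _, rfl⟩ := hx; exact hall m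
          have hcard : k + 1 ≤ S.card := by
            calc k + 1 = (Finset.image (fun m => (Sum.inl (i, m) : V)) Finset.univ).card := by
                  rw [Finset.card_image_of_injective _ (hinj i)]; simp
              _ ≤ S.card := Finset.card_le_card hsub
          omega
        obtain ⟨m, hm⟩ := this
        exact ⟨(i, m), hm, Adj.reachable (by exact (rfl : i = i))⟩
    intro u v
    obtain ⟨p, hp', hru⟩ := hub u
    obtain ⟨q, hq', hrv⟩ := hub v
    by_cases hpq : p = q
    · subst hpq
      exact hru.trans hrv.symm
    · exact hru.trans (Reachable.trans (Adj.reachable (by exact hpq)) hrv.symm)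
  exact le_antisymm (Nat.sInf_le hmem) (le_csInf ⟨_, hmem⟩ hlow)

/-- For a `(k,t)`-split graph with `r ≥ 2` parts, the vertex connectivity
equals `k` and the algebraic connectivity is strictly smaller than it. -/
theorem stmt_17 (r k t : ℕ) (hr : 2 ≤ r) (hk : 1 ≤ k) (ht : 1 ≤ t) :
    vertexConnectivity (ktSplit r k t) = k ∧
      algConn (ktSplit r k t) < (k : ℝ) := by
  obtain ⟨r, rfl⟩ := Nat.exists_eq_add_of_le' hr
  obtain ⟨k, rfl⟩ := Nat.exists_eq_add_of_le' hk
  obtain ⟨t, rfl⟩ := Nat.exists_eq_add_of_le' ht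
  constructor
  · exact vc_eq r k t
  · have h := alg_lt r k t
    have hc : ((k:ℝ)+1) = (((k+1:ℕ)):ℝ) := by push_cast; ring
    rw [hc] at h
    exact h

end Aux
end

section
/- Let G be a connected chordal graph and T a clique tree of G (a tree on the maximal cliques of G such that for any two maximal cliques Q, Q', every clique on the T-path between them contains Q ∩ Q'). Then a set S of vertices is a minimal vertex separator of G if and only if S = Q ∩ Q' for some edge {Q, Q'} of T. -/
open SimpleGraph

/-- A maximal clique of `G`. -/
def IsMaximalClique {V : Type*} (G : SimpleGraph V) (Q : Set V) : Prop :=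
  G.IsClique Q ∧ ∀ R : Set V, G.IsClique R → Q ⊆ R → R = Q

section Aux

lemma exists_maxclique_supset {V : Type*} [Finite V] (G : SimpleGraph V)
    {C : Set V} (hC : G.IsClique C) :
    ∃ Q : Set V, IsMaximalClique G Q ∧ C ⊆ Q := by
  obtain ⟨Q, hQ, hmax⟩ := Set.Finite.exists_maximalFor id {R : Set V | G.IsClique R ∧ C ⊆ R}
    (Set.toFinite _) ⟨C, hC, subset_rfl⟩
  exact ⟨Q, ⟨hQ.1, fun R hR hQR => subset_antisymm (hmax ⟨hR, hQ.2.trans hQR⟩ hQR) hQR⟩, hQ.2⟩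

lemma reach_side {K : Type*} {T : SimpleGraph K} (hc : T.Connected) (Q Q' R : K) :
    (T.deleteEdges {s(Q, Q')}).Reachable Q R ∨ (T.deleteEdges {s(Q, Q')}).Reachable Q' R := by
  have key : ∀ {a b : K} (_ : T.Walk a b),
      ((T.deleteEdges {s(Q, Q')}).Reachable Q a ∨ (T.deleteEdges {s(Q, Q')}).Reachable Q' a) →
      ((T.deleteEdges {s(Q, Q')}).Reachable Q b ∨ (T.deleteEdges {s(Q, Q')}).Reachable Q' b) := by
    intro a b w
    induction w with
    | nil => exact id
    | @cons a c b h q ih =>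
      intro hab
      apply ih
      by_cases he : s(a, c) = s(Q, Q')
      · rcases Sym2.eq_iff.mp he with ⟨rfl, rfl⟩ | ⟨rfl, rfl⟩
        · exact Or.inr (Reachable.refl _)
        · exact Or.inl (Reachable.refl _)
      · have hadj : (T.deleteEdges {s(Q, Q')}).Adj a c := by
          rw [SimpleGraph.deleteEdges_adj]
          exact ⟨h, by simpa using he⟩
        rcases hab with h1 | h1
        · exact Or.inl (h1.trans hadj.reachable)
        · exact Or.inr (h1.trans hadj.reachable)
  exact key (hc.preconnected Q R).some (Or.inl (Reachable.refl Q))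

lemma walk_uses_edge {K : Type*} {T : SimpleGraph K} (hac : T.IsAcyclic) {Q Q' : K}
    (hadj : T.Adj Q Q') {R R' : K} (w : T.Walk R R')
    (hR : (T.deleteEdges {s(Q, Q')}).Reachable Q R)
    (hR' : (T.deleteEdges {s(Q, Q')}).Reachable Q' R') :
    s(Q, Q') ∈ w.edges := by
  by_contra he
  have hreach : (T.deleteEdges {s(Q, Q')}).Reachable R R' :=
    ⟨w.toDeleteEdges _ (fun e hew hmem => he (Set.mem_singleton_iff.mp hmem ▸ hew))⟩
  have hb := isAcyclic_iff_forall_adj_isBridge.mp hac hadj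
  rw [isBridge_iff] at hb
  exact hb (hR.trans (hreach.trans hR'.symm))

lemma dart_side {K : Type*} {T : SimpleGraph K} :
    ∀ {A B : K} (p : T.Walk A B), p.IsPath → ∀ d ∈ p.darts,
      (T.deleteEdges {s(d.fst, d.snd)}).Reachable d.fst A ∧
      (T.deleteEdges {s(d.fst, d.snd)}).Reachable d.snd B := by
  intro A B p
  induction p with
  | nil => intro _ d hd; simp at hd
  | @cons A C B h q ih =>
    intro hp d hd
    have hACq : s(A, C) ∉ q.edges := by
      have := hp.edges_nodup
      rw [Walk.edges_cons, List.nodup_cons] at this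
      exact this.1
    rw [Walk.darts_cons, List.mem_cons] at hd
    rcases hd with rfl | hd
    · refine ⟨Reachable.refl _, ⟨q.toDeleteEdges _ ?_⟩⟩
      intro e hew hmem
      exact hACq (Set.mem_singleton_iff.mp hmem ▸ hew)
    · obtain ⟨h1, h2⟩ := ih hp.of_cons d hd
      have hd_edge : s(d.fst, d.snd) ∈ q.edges := List.mem_map_of_mem (f := Dart.edge) hd
      have hne : s(C, A) ∉ ({s(d.fst, d.snd)} : Set (Sym2 K)) := by
        rw [Set.mem_singleton_iff, Sym2.eq_swap]
        intro heq
        exact hACq (heq ▸ hd_edge)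
      have hadjCA : (T.deleteEdges {s(d.fst, d.snd)}).Adj C A :=
        SimpleGraph.deleteEdges_adj.mpr ⟨h.symm, hne⟩
      exact ⟨h1.trans hadjCA.reachable, h2⟩

lemma walkside {V K : Type*} {G : SimpleGraph V} (c : K → Set V)
    (hedge : ∀ {u v : V}, G.Adj u v → ∃ k, u ∈ c k ∧ v ∈ c k)
    (S : Set V) (p1 p2 : K → Prop)
    (hcov : ∀ k, p1 k ∨ p2 k)
    (hcross : ∀ k k', p1 k → p2 k' → c k ∩ c k' ⊆ S) :
    ∀ {x b : V} (w : G.Walk x b), (∀ y ∈ w.support, y ∉ S) → ∀ kx, x ∈ c kx → p1 kx →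
      ∃ kb, b ∈ c kb ∧ p1 kb := by
  intro x b w
  induction w with
  | nil => intro _ kx hx h1; exact ⟨kx, hx, h1⟩
  | @cons x y b h q ih =>
    intro hS kx hx h1
    obtain ⟨k, hu, hv⟩ := hedge h
    rcases hcov k with hk | hk
    · exact ih (fun z hz => hS z (by simp [hz])) k hv hk
    · exact absurd (hcross kx k h1 hk ⟨hx, hu⟩) (fun hmem => hS x (Walk.start_mem_support _) hmem)

lemma buildwalk {V K : Type*} {G : SimpleGraph V} {T : SimpleGraph K} (c : K → Set V)
    (hcl : ∀ k, G.IsClique (c k)) (S : Set V) :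
    ∀ {A B : K} (p : T.Walk A B), (∀ d ∈ p.darts, ¬ (c d.fst ∩ c d.snd ⊆ S)) →
      ∀ a b, a ∈ c A → b ∈ c B → a ∉ S → b ∉ S →
      ∃ w : G.Walk a b, ∀ x ∈ w.support, x ∉ S := by
  intro A B p
  induction p with
  | nil =>
    intro _ a b ha hb haS hbS
    by_cases hab : a = b
    · subst hab; exact ⟨Walk.nil, by simpa using haS⟩
    · refine ⟨Walk.cons (hcl _ ha hb hab) Walk.nil, ?_⟩
      intro x hx
      simp only [Walk.support_cons, Walk.support_nil, List.mem_cons, List.mem_singleton,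
        List.not_mem_nil, or_false] at hx
      rcases hx with rfl | rfl <;> assumption
  | @cons A C B h q ih =>
    intro hd a b ha hb haS hbS
    obtain ⟨x, hx, hxS⟩ := Set.not_subset.mp (hd _ List.mem_cons_self)
    obtain ⟨w2, hw2⟩ := ih (fun d hd' => hd d (List.mem_cons_of_mem _ hd')) x b hx.2 hb hxS hbS
    by_cases hax : a = x
    · subst hax; exact ⟨w2, hw2⟩
    · refine ⟨Walk.cons (hcl _ ha hx.1 hax) w2, ?_⟩
      intro y hy
      rw [Walk.support_cons, List.mem_cons] at hy
      rcases hy with rfl | hy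
      · exact haS
      · exact hw2 y hy

end Aux

/-- For a clique tree `T` of a connected chordal graph `G` (a tree on the
maximal cliques such that every clique on the path between `Q` and `Q'` contains
`Q ∩ Q'`), a set `S` is a minimal vertex separator of `G` iff `S = Q ∩ Q'` for some
edge `{Q, Q'}` of `T`. -/
theorem stmt_18 {V : Type*} [Fintype V] [DecidableEq V] (G : SimpleGraph V)
    (hconn : G.Connected) (hch : IsChordal G)
    (T : SimpleGraph {Q : Set V // IsMaximalClique G Q}) (hT : T.IsTree)
    (hri : ∀ (Q Q' : {Q : Set V // IsMaximalClique G Q}) (p : T.Walk Q Q'),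
      p.IsPath → ∀ R ∈ p.support, Q.1 ∩ Q'.1 ⊆ R.1) :
    ∀ S : Set V, IsMinimalVertexSeparator G S ↔
      ∃ Q Q' : {Q : Set V // IsMaximalClique G Q}, T.Adj Q Q' ∧ S = Q.1 ∩ Q'.1 := by
  classical
  have hTc : T.Connected := hT.isConnected
  have hTa : T.IsAcyclic := hT.IsAcyclic
  -- every edge of G lies in a maximal clique
  have hedge : ∀ {u v : V}, G.Adj u v → ∃ k : {Q : Set V // IsMaximalClique G Q}, u ∈ k.1 ∧ v ∈ k.1 := by
    intro u v huv
    obtain ⟨Q, hQ, hsub⟩ := exists_maxclique_supset G (SimpleGraph.isClique_pair.mpr fun _ => huv)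
    exact ⟨⟨Q, hQ⟩, hsub (by simp), hsub (by simp)⟩
  -- every vertex lies in a maximal clique
  have hvert : ∀ v : V, ∃ k : {Q : Set V // IsMaximalClique G Q}, v ∈ k.1 := by
    intro v
    obtain ⟨Q, hQ, hsub⟩ := exists_maxclique_supset G (SimpleGraph.isClique_singleton v)
    exact ⟨⟨Q, hQ⟩, hsub rfl⟩
  -- adjacent cliques in T differ
  have hQne : ∀ {Q Q' : {Q : Set V // IsMaximalClique G Q}}, T.Adj Q Q' → ∃ x, x ∈ Q.1 ∧ x ∉ Q'.1 := by
    intro Q Q' h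
    apply Set.not_subset.mp
    intro hsub
    have : Q'.1 = Q.1 := by
      have := Q.2.2 Q'.1 Q'.2.1 hsub
      exact this
    exact h.ne (Subtype.ext this.symm)
  -- crossing lemma
  have crossing : ∀ (Q Q' R R' : {Q : Set V // IsMaximalClique G Q}), T.Adj Q Q' →
      (T.deleteEdges {s(Q, Q')}).Reachable Q R → (T.deleteEdges {s(Q, Q')}).Reachable Q' R' →
      R.1 ∩ R'.1 ⊆ Q.1 ∩ Q'.1 := by
    intro Q Q' R R' hadj hR hR'
    obtain ⟨p, hp⟩ := ((hTc.preconnected R R').some.toPath : T.Path R R')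
    have hmem := walk_uses_edge hTa hadj p hR hR'
    have hQs := p.fst_mem_support_of_mem_edges hmem
    have hQ's := p.snd_mem_support_of_mem_edges hmem
    intro x hx
    exact ⟨hri R R' p hp Q hQs hx, hri R R' p hp Q' hQ's hx⟩
  -- separation lemma
  have sep : ∀ (Q Q' : {Q : Set V // IsMaximalClique G Q}), T.Adj Q Q' → ∀ (a b : V) (Ra Rb : {Q : Set V // IsMaximalClique G Q}),
      a ∈ Ra.1 → b ∈ Rb.1 →
      (T.deleteEdges {s(Q, Q')}).Reachable Q Ra → (T.deleteEdges {s(Q, Q')}).Reachable Q' Rb →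
      a ∉ Q.1 ∩ Q'.1 → b ∉ Q.1 ∩ Q'.1 → SeparatesPair G (Q.1 ∩ Q'.1) a b := by
    intro Q Q' hadj a b Ra Rb ha hb hRa hRb haS hbS
    refine ⟨haS, hbS, fun w => ?_⟩
    by_contra hno
    push_neg at hno
    obtain ⟨Rb', hb', hside⟩ := walkside (fun k : {Q : Set V // IsMaximalClique G Q} => k.1) hedge (Q.1 ∩ Q'.1)
      (fun R => (T.deleteEdges {s(Q, Q')}).Reachable Q R)
      (fun R => (T.deleteEdges {s(Q, Q')}).Reachable Q' R)
      (reach_side hTc Q Q')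
      (fun R R' h1 h2 => crossing Q Q' R R' hadj h1 h2)
      w hno Ra ha hRa
    exact hbS (crossing Q Q' Rb' Rb hadj hside hRb ⟨hb', hb⟩)
  intro S
  constructor
  · rintro ⟨u, v, huv, hnadj, hsep, hmin⟩
    obtain ⟨Qu, hu⟩ := hvert u
    obtain ⟨Qv, hv⟩ := hvert v
    obtain ⟨p, hp⟩ := ((hTc.preconnected Qu Qv).some.toPath : T.Path Qu Qv)
    have huS : u ∉ S := hsep.1
    have hvS : v ∉ S := hsep.2.1
    have hdart : ∃ d ∈ p.darts, d.fst.1 ∩ d.snd.1 ⊆ S := by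
      by_contra hno
      push_neg at hno
      obtain ⟨w, hw⟩ := buildwalk (fun k : {Q : Set V // IsMaximalClique G Q} => k.1) (fun k => k.2.1) S p hno u v hu hv huS hvS
      obtain ⟨x, hx1, hx2⟩ := hsep.2.2 w
      exact hw x hx1 hx2
    obtain ⟨d, hd, hdS⟩ := hdart
    obtain ⟨h1, h2⟩ := dart_side p hp d hd
    refine ⟨d.fst, d.snd, d.adj, ?_⟩
    have hsep' : SeparatesPair G (d.fst.1 ∩ d.snd.1) u v :=
      sep d.fst d.snd d.adj u v Qu Qv hu hv h1 h2
        (fun h => huS (hdS h)) (fun h => hvS (hdS h))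
    by_contra hne
    exact hmin _ ⟨hdS, fun hSS => hne (subset_antisymm hSS hdS)⟩ hsep'
  · rintro ⟨Q, Q', hadj, rfl⟩
    obtain ⟨u0, hu0Q, hu0Q'⟩ := hQne hadj
    obtain ⟨v0, hv0Q', hv0Q⟩ := hQne hadj.symm
    have hu0S : u0 ∉ Q.1 ∩ Q'.1 := fun h => hu0Q' h.2
    have hv0S : v0 ∉ Q.1 ∩ Q'.1 := fun h => hv0Q h.1
    have hsepuv : SeparatesPair G (Q.1 ∩ Q'.1) u0 v0 :=
      sep Q Q' hadj u0 v0 Q Q' hu0Q hv0Q' (Reachable.refl Q) (Reachable.refl Q') hu0S hv0S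
    have hne' : u0 ≠ v0 := fun h => hv0Q (h ▸ hu0Q)
    have hnadj : ¬ G.Adj u0 v0 := by
      intro hadj'
      obtain ⟨R, huR, hvR⟩ := hedge hadj'
      rcases reach_side hTc Q Q' R with hs | hs
      · exact hv0Q (crossing Q Q' R Q' hadj hs (Reachable.refl _) ⟨hvR, hv0Q'⟩).1
      · exact hu0Q' (crossing Q Q' Q R hadj (Reachable.refl _) hs ⟨hu0Q, huR⟩).2
    refine ⟨u0, v0, hne', hnadj, hsepuv, ?_⟩
    intro W hW hsepW
    obtain ⟨s, hsS, hsW⟩ := Set.exists_of_ssubset hW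
    have hus : u0 ≠ s := fun h => hu0S (h ▸ hsS)
    have hsv : s ≠ v0 := fun h => hv0S (h ▸ hsS)
    have hadj1 : G.Adj u0 s := Q.2.1 hu0Q hsS.1 hus
    have hadj2 : G.Adj s v0 := Q'.2.1 hsS.2 hv0Q' hsv
    obtain ⟨x, hx, hxW⟩ := hsepW.2.2 (Walk.cons hadj1 (Walk.cons hadj2 Walk.nil))
    simp only [Walk.support_cons, Walk.support_nil, List.mem_cons, List.mem_singleton,
      List.not_mem_nil, or_false] at hx
    rcases hx with rfl | rfl | rfl
    · exact hu0S (hW.subset hxW)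
    · exact hsW hxW
    · exact hv0S (hW.subset hxW)
end
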